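/- arXiv:2006.02318 — 9 statements merged into one kernel-verified Lean document; each statement's English description precedes it below -/
import Mathlib

section
/- Let B ≥ 1 be an integer and let v, w : Fin B → ℝ be vectors with strictly positive entries such that v majorizes w. Then for every real q with 0 < q < 1, ∏_{i=1}^{B} (1 − q^{v_i}) ≤ ∏_{i=1}^{B} (1 − q^{w_i}). (Taking q = Ḡ(t) to be the common complementary CDF of a single worker's batch-completion time at time t, this says that the job compute time — the maximum over batches of the minimum over the v_i replicas — under assignment v is stochastically larger than under assignment w.) -/
open Finset Real

/-!
For `0 < q < 1` the function `x ↦ log (1 - q ^ x)` is concave on `(0, ∞)`, being the increasing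
concave `log` composed with the concave `1 - q ^ x`. Taking logarithms, the claim is Karamata's
inequality for this function. After sorting `w` decreasingly (and `v` too, to turn the majorization
hypothesis into domination of prefix sums), the tangent-line bound
`f (v i) ≤ f (w i) + f' (w i) * (v i - w i)` reduces it to `∑ f' (w i) * (v i - w i) ≤ 0`, which is
Abel summation: `f' (w i)` increases with `i` while the prefix sums of `v - w` are nonnegative and
the total is zero.
-/

theorem Finset.sum_le_sum_Iic_of_antitone {α M : Type*} [LinearOrder α] [LocallyFiniteOrderBot α]
    [AddCommMonoid M] [PartialOrder M] [IsOrderedAddMonoid M] {f : α → M} (hf : Antitone f)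
    {s : Finset α} {k : α} (hs : #s = #(Iic k)) :
    ∑ x ∈ s, f x ≤ ∑ x ∈ Iic k, f x := by
  calc ∑ x ∈ s, f x ≤ ∑ x ∈ s ∩ Iic k, f x + #(s \ Iic k) • f k := by
        rw [← sum_inter_add_sum_sdiff s (Iic k)]
        gcongr
        refine sum_le_card_nsmul _ _ _ fun x hx ↦ hf ?_
        simp only [mem_sdiff, mem_Iic, not_le] at hx
        exact hx.2.le
    _ = ∑ x ∈ Iic k ∩ s, f x + #(Iic k \ s) • f k := by
        rw [inter_comm, card_sdiff_comm hs]
    _ ≤ ∑ x ∈ Iic k, f x := by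
        rw [← sum_inter_add_sum_sdiff (Iic k) s]
        gcongr
        refine card_nsmul_le_sum _ _ _ fun x hx ↦ hf ?_
        exact mem_Iic.mp (mem_sdiff.mp hx).1

/-- Abel's inequality. -/
theorem Fin.sum_mul_le_mul_sum_of_monotone {R : Type*} [Ring R] [PartialOrder R] [IsOrderedRing R] :
    ∀ {n : ℕ} {c d : Fin n → R}, Monotone c → (∀ k, 0 ≤ ∑ i ∈ Iic k, d i) →
      ∀ {C : R}, (∀ i, c i ≤ C) → ∑ i, c i * d i ≤ C * ∑ i, d i
  | 0, _, _, _, _, _, _ => by simp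
  | n + 1, c, d, hc, hd, C, hC => by
    have hprefix : ∀ k : Fin n, 0 ≤ ∑ i ∈ Iic k, d (castSucc i) := fun k ↦ by
      simpa [← map_castSuccEmb_Iic, sum_map] using hd k.castSucc
    have hinit := sum_mul_le_mul_sum_of_monotone (hc.comp (strictMono_castSucc.monotone)) hprefix
      (C := c (last n)) fun i ↦ hc (castSucc_lt_last i).le
    have hIic_last : Iic (last n) = univ := eq_univ_of_forall fun i ↦ mem_Iic.mpr (le_last i)
    have htotal : 0 ≤ ∑ i, d i := by simpa [hIic_last] using hd (last n)
    calc ∑ i, c i * d i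
        = ∑ i : Fin n, c (castSucc i) * d (castSucc i) + c (last n) * d (last n) :=
          sum_univ_castSucc _
      _ ≤ c (last n) * ∑ i : Fin n, d (castSucc i) + c (last n) * d (last n) := by
          gcongr
          exact hinit
      _ = c (last n) * ∑ i, d i := by rw [sum_univ_castSucc d, mul_add]
      _ ≤ C * ∑ i, d i := mul_le_mul_of_nonneg_right (hC _) htotal

theorem ConcaveOn.le_add_deriv_mul_sub {D : Set ℝ} {f : ℝ → ℝ} (hf : ConcaveOn ℝ D f) {x y : ℝ}
    (hx : x ∈ D) (hy : y ∈ D) (hfd : DifferentiableAt ℝ f x) :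
    f y ≤ f x + deriv f x * (y - x) := by
  rcases lt_trichotomy x y with hxy | rfl | hyx
  · have := hf.slope_le_deriv hx hy hxy hfd
    rw [slope_def_field, div_le_iff₀ (sub_pos.mpr hxy)] at this
    linarith
  · simp
  · have := hf.deriv_le_slope hy hx hyx hfd
    rw [slope_def_field, le_div_iff₀ (sub_pos.mpr hyx)] at this
    linarith

theorem ConcaveOn.sum_le_sum_of_sum_Iic_le {D : Set ℝ} {f : ℝ → ℝ} (hf : ConcaveOn ℝ D f)
    (hfd : ∀ x ∈ D, DifferentiableAt ℝ f x) {n : ℕ} {v w : Fin n → ℝ} (hv : ∀ i, v i ∈ D)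
    (hw : ∀ i, w i ∈ D) (hw_anti : Antitone w)
    (hprefix : ∀ k, ∑ i ∈ Iic k, w i ≤ ∑ i ∈ Iic k, v i) (hsum : ∑ i, v i = ∑ i, w i) :
    ∑ i, f (v i) ≤ ∑ i, f (w i) := by
  set c : Fin n → ℝ := fun i ↦ deriv f (w i)
  have hc : Monotone c := fun i j hij ↦
    hf.antitoneOn_deriv hfd (hw j) (hw i) (hw_anti hij)
  obtain ⟨C, hC⟩ := (Set.finite_range c).bddAbove
  have habel : ∑ i, c i * (v i - w i) ≤ 0 := by
    calc ∑ i, c i * (v i - w i) ≤ C * ∑ i, (v i - w i) :=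
          Fin.sum_mul_le_mul_sum_of_monotone hc
            (fun k ↦ by simpa only [sum_sub_distrib, sub_nonneg] using hprefix k)
            fun i ↦ hC (Set.mem_range_self i)
      _ = 0 := by rw [sum_sub_distrib, hsum, sub_self, mul_zero]
  calc ∑ i, f (v i) ≤ ∑ i, (f (w i) + c i * (v i - w i)) :=
        sum_le_sum fun i _ ↦ hf.le_add_deriv_mul_sub (hw i) (hv i) (hfd _ (hw i))
    _ = ∑ i, f (w i) + ∑ i, c i * (v i - w i) := sum_add_distrib
    _ ≤ ∑ i, f (w i) := by linarith

theorem Tuple.exists_antitone_comp_perm {α : Type*} [LinearOrder α] {n : ℕ} (f : Fin n → α) :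
    ∃ σ : Equiv.Perm (Fin n), Antitone (f ∘ σ) :=
  ⟨Fin.revPerm.trans (Tuple.sort f), fun _ _ hij ↦ Tuple.monotone_sort f (Fin.rev_le_rev.mpr hij)⟩

theorem sum_Iic_comp_perm_le {n : ℕ} {v w : Fin n → ℝ}
    (hmaj : ∀ m : ℕ, 1 ≤ m → m ≤ n → ∀ S : Finset (Fin n), S.card = m →
      ∃ S' : Finset (Fin n), S'.card = m ∧ ∑ i ∈ S, w i ≤ ∑ i ∈ S', v i)
    (σ : Equiv.Perm (Fin n)) {τ : Equiv.Perm (Fin n)} (hτ : Antitone (v ∘ τ)) (k : Fin n) :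
    ∑ i ∈ Iic k, w (σ i) ≤ ∑ i ∈ Iic k, v (τ i) := by
  have hcard : #((Iic k).map σ.toEmbedding) = k + 1 := by simp
  obtain ⟨S', hS'card, hS'⟩ := hmaj _ (Nat.le_add_left 1 k) (by omega) _ hcard
  calc ∑ i ∈ Iic k, w (σ i) = ∑ i ∈ (Iic k).map σ.toEmbedding, w i := by rw [sum_map]; rfl
    _ ≤ ∑ i ∈ S', v i := hS'
    _ = ∑ i ∈ S'.map τ.symm.toEmbedding, v (τ i) := by simp [sum_map]
    _ ≤ ∑ i ∈ Iic k, v (τ i) := sum_le_sum_Iic_of_antitone hτ (by simp [hS'card])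

theorem one_sub_rpow_pos {q x : ℝ} (hq0 : 0 ≤ q) (hq1 : q < 1) (hx : 0 < x) : 0 < 1 - q ^ x :=
  sub_pos.mpr (rpow_lt_one hq0 hq1 hx)

theorem concaveOn_log_one_sub_rpow {q : ℝ} (hq0 : 0 < q) (hq1 : q < 1) :
    ConcaveOn ℝ (Set.Ioi 0) fun x : ℝ ↦ log (1 - q ^ x) := by
  have hsub : ConcaveOn ℝ (Set.Ioi 0) fun x : ℝ ↦ 1 - q ^ x := by
    have := ((convexOn_rpow_left hq0).subset (Set.subset_univ _) (convex_Ioi 0)).neg.add_const 1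
    simpa only [Pi.neg_def, Pi.add_def, neg_add_eq_sub, add_comm] using this
  have hpos : ∀ x ∈ Set.Ioi (0 : ℝ), 0 < 1 - q ^ x := fun _ hx ↦ one_sub_rpow_pos hq0.le hq1 hx
  refine ⟨convex_Ioi 0, fun x hx y hy a b ha hb hab ↦ ?_⟩
  calc a • log (1 - q ^ x) + b • log (1 - q ^ y)
      ≤ log (a • (1 - q ^ x) + b • (1 - q ^ y)) :=
        strictConcaveOn_log_Ioi.concaveOn.2 (hpos x hx) (hpos y hy) ha hb hab
    _ ≤ log (1 - q ^ (a • x + b • y)) :=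
        log_le_log (convex_Ioi (0 : ℝ) (hpos x hx) (hpos y hy) ha hb hab) (hsub.2 hx hy ha hb hab)

theorem replication_majorization_stochastic_order_general
    (B : ℕ) (v w : Fin B → ℝ)
    (hv : ∀ i, 0 < v i) (hw : ∀ i, 0 < w i)
    (hsum : ∑ i, v i = ∑ i, w i)
    (hmaj : ∀ m : ℕ, 1 ≤ m → m ≤ B → ∀ S : Finset (Fin B), S.card = m →
      ∃ S' : Finset (Fin B), S'.card = m ∧ ∑ i ∈ S, w i ≤ ∑ i ∈ S', v i)
    (q : ℝ) (hq0 : 0 < q) (hq1 : q < 1) :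
    ∏ i, (1 - q ^ (v i)) ≤ ∏ i, (1 - q ^ (w i)) := by
  obtain ⟨σ, hσ⟩ := Tuple.exists_antitone_comp_perm w
  obtain ⟨τ, hτ⟩ := Tuple.exists_antitone_comp_perm v
  have hpos : ∀ x : ℝ, 0 < x → 0 < 1 - q ^ x := fun _ ↦ one_sub_rpow_pos hq0.le hq1
  have hdiff : ∀ x ∈ Set.Ioi (0 : ℝ), DifferentiableAt ℝ (fun y : ℝ ↦ log (1 - q ^ y)) x :=
    fun x hx ↦ ((differentiableAt_const 1).sub
      (hasStrictDerivAt_const_rpow hq0 x).hasDerivAt.differentiableAt).log (hpos x hx).ne'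
  have hlog := (concaveOn_log_one_sub_rpow hq0 hq1).sum_le_sum_of_sum_Iic_le hdiff
    (fun i ↦ hv (τ i)) (fun i ↦ hw (σ i)) hσ (sum_Iic_comp_perm_le hmaj σ hτ)
    (by rw [Equiv.sum_comp τ v, Equiv.sum_comp σ w, hsum])
  rw [← Equiv.prod_comp τ, ← Equiv.prod_comp σ (fun i ↦ 1 - q ^ w i),
    ← log_le_log_iff (prod_pos fun i _ ↦ hpos _ (hv _)) (prod_pos fun i _ ↦ hpos _ (hw _)),
    log_prod fun i _ ↦ (hpos _ (hv _)).ne', log_prod fun i _ ↦ (hpos _ (hw _)).ne']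
  exact hlog

/-- If `v` majorizes `w` (both with strictly positive entries), then for every `0 < q < 1`,
`∏ i, (1 - q ^ (v i)) ≤ ∏ i, (1 - q ^ (w i))` (real powers), i.e. the job compute time under
assignment `v` is stochastically larger than under assignment `w`. -/
theorem replication_majorization_stochastic_order
    (B : ℕ) (hB : 1 ≤ B) (v w : Fin B → ℝ)
    (hv : ∀ i, 0 < v i) (hw : ∀ i, 0 < w i)
    (hsum : ∑ i, v i = ∑ i, w i)
    (hmaj : ∀ m : ℕ, 1 ≤ m → m ≤ B → ∀ S : Finset (Fin B), S.card = m →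
      ∃ S' : Finset (Fin B), S'.card = m ∧ ∑ i ∈ S, w i ≤ ∑ i ∈ S', v i)
    (q : ℝ) (hq0 : 0 < q) (hq1 : q < 1) :
    ∏ i, (1 - q ^ (v i)) ≤ ∏ i, (1 - q ^ (w i)) :=
  replication_majorization_stochastic_order_general B v w hv hw hsum hmaj q hq0 hq1
end

section
/- Let μ > 0 be real, let B and N be positive integers with B dividing N, and let v : Fin B → ℕ have entries v_i ≥ 1 with ∑_{i=1}^{B} v_i = N. Then ∫_0^∞ (1 − ∏_{i=1}^{B} (1 − e^{−v_i μ t})) dt ≥ ∫_0^∞ (1 − (1 − e^{−(N/B) μ t})^B) dt. (The left side is the expected job compute time when batch i is replicated on v_i workers with i.i.d. Exponential(μ) service times, and the right side is the expected job compute time of the balanced assignment where each of the B non-overlapping batches is replicated on exactly N/B workers; thus the balanced assignment minimizes the average job compute time.) -/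
open Finset MeasureTheory


-- Weierstrass product inequality
lemma aux_one_sub_sum_le_prod {ι : Type*} (s : Finset ι) (a : ι → ℝ)
    (h0 : ∀ i ∈ s, 0 ≤ a i) (h1 : ∀ i ∈ s, a i ≤ 1) :
    1 - ∑ i ∈ s, a i ≤ ∏ i ∈ s, (1 - a i) := by
  induction s using Finset.cons_induction with
  | empty => simp
  | cons j s hj ih =>
    rw [Finset.sum_cons, Finset.prod_cons]
    have h0' : ∀ i ∈ s, 0 ≤ a i := fun i hi => h0 i (Finset.mem_cons_of_mem hi)
    have h1' : ∀ i ∈ s, a i ≤ 1 := fun i hi => h1 i (Finset.mem_cons_of_mem hi)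
    have hP := ih h0' h1'
    have haj0 : 0 ≤ a j := h0 j (Finset.mem_cons_self _ _)
    have haj1 : a j ≤ 1 := h1 j (Finset.mem_cons_self _ _)
    have hS : 0 ≤ ∑ i ∈ s, a i := Finset.sum_nonneg h0'
    nlinarith [mul_le_mul_of_nonneg_left hP (by linarith : (0:ℝ) ≤ 1 - a j)]

lemma aux_key {B : ℕ} (hB : 0 < B) (c : Fin B → ℝ) (hc : ∀ i, 0 ≤ c i) (t : ℝ) (ht : 0 ≤ t) :
    ∏ i, (1 - Real.exp (-(c i) * t)) ≤
      (1 - Real.exp (-((∑ i, c i) / B) * t)) ^ B := by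
  have hB' : (0:ℝ) < B := Nat.cast_pos.mpr hB
  set x : Fin B → ℝ := fun i => 1 - Real.exp (-(c i) * t) with hx
  have hx0 : ∀ i, 0 ≤ x i := fun i => by
    have : Real.exp (-(c i) * t) ≤ 1 := Real.exp_le_one_iff.mpr (by nlinarith [hc i])
    simpa [hx] using this
  have hx1 : ∀ i, x i ≤ 1 := fun i => by
    have := (Real.exp_pos (-(c i) * t)).le; simp only [hx]; linarith
  have hw : ∑ _i : Fin B, (1/(B:ℝ)) = 1 := by
    simp [Finset.sum_const]; field_simp
  -- AM-GM on x
  have amgm1 : ∏ i, (x i) ^ (1/(B:ℝ)) ≤ ∑ i, (1/(B:ℝ)) * x i :=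
    Real.geom_mean_le_arith_mean_weighted _ _ _ (fun i _ => by positivity) hw (fun i _ => hx0 i)
  -- AM-GM on exp values
  have amgm2 : ∏ i, (Real.exp (-(c i) * t)) ^ (1/(B:ℝ)) ≤
      ∑ i, (1/(B:ℝ)) * Real.exp (-(c i) * t) :=
    Real.geom_mean_le_arith_mean_weighted _ _ _ (fun i _ => by positivity) hw
      (fun i _ => (Real.exp_pos _).le)
  have hgm2 : ∏ i, (Real.exp (-(c i) * t)) ^ (1/(B:ℝ)) =
      Real.exp (-((∑ i, c i) / B) * t) := by
    have : ∀ i : Fin B, (Real.exp (-(c i) * t)) ^ (1/(B:ℝ)) =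
        Real.exp (-(c i) * t * (1/(B:ℝ))) := fun i => (Real.exp_mul _ _).symm
    simp_rw [this]
    rw [← Real.exp_sum, ← Finset.sum_mul, ← Finset.sum_mul, Finset.sum_neg_distrib]
    congr 1
    ring
  -- combine
  have hgm1 : (∏ i, (x i) ^ (1/(B:ℝ)))^B = ∏ i, x i := by
    rw [Real.finset_prod_rpow _ _ (fun i _ => hx0 i), ← Real.rpow_natCast _ B,
      ← Real.rpow_mul (Finset.prod_nonneg (fun i _ => hx0 i))]
    rw [one_div, inv_mul_cancel₀ (ne_of_gt hB'), Real.rpow_one]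
  have hmean : ∑ i, (1/(B:ℝ)) * x i ≤ 1 - Real.exp (-((∑ i, c i) / B) * t) := by
    have := hgm2 ▸ amgm2
    simp only [hx, mul_sub, Finset.sum_sub_distrib, mul_one, hw]
    linarith
  calc ∏ i, x i = (∏ i, (x i) ^ (1/(B:ℝ)))^B := hgm1.symm
    _ ≤ (∑ i, (1/(B:ℝ)) * x i)^B := by
        apply pow_le_pow_left₀ (Finset.prod_nonneg (fun i _ => Real.rpow_nonneg (hx0 i) _)) amgm1
    _ ≤ (1 - Real.exp (-((∑ i, c i) / B) * t)) ^ B := by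
        apply pow_le_pow_left₀ (Finset.sum_nonneg (fun i _ => mul_nonneg (by positivity) (hx0 i))) hmean

lemma aux_integrable {B : ℕ} (c : Fin B → ℝ) (hc : ∀ i, 0 < c i) :
    IntegrableOn (fun t => 1 - ∏ i, (1 - Real.exp (-(c i) * t))) (Set.Ioi (0:ℝ)) := by
  have hg : IntegrableOn (fun t => ∑ i, Real.exp (-(c i) * t)) (Set.Ioi (0:ℝ)) :=
    integrable_finset_sum _ (fun i _ => exp_neg_integrableOn_Ioi 0 (hc i))
  apply Integrable.mono' hg
  · apply Continuous.aestronglyMeasurable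
    continuity
  · filter_upwards [ae_restrict_mem measurableSet_Ioi] with t ht
    have hexp0 : ∀ i : Fin B, (0:ℝ) ≤ Real.exp (-(c i) * t) := fun i => (Real.exp_pos _).le
    have hexp1 : ∀ i : Fin B, Real.exp (-(c i) * t) ≤ 1 := fun i =>
      Real.exp_le_one_iff.mpr (by nlinarith [hc i, Set.mem_Ioi.mp ht])
    have hW : 1 - ∑ i, Real.exp (-(c i) * t) ≤ ∏ i, (1 - Real.exp (-(c i) * t)) :=
      aux_one_sub_sum_le_prod _ _ (fun i _ => hexp0 i) (fun i _ => hexp1 i)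
    have hP1 : ∏ i, (1 - Real.exp (-(c i) * t)) ≤ 1 :=
      Finset.prod_le_one (fun i _ => by linarith [hexp1 i]) (fun i _ => by linarith [hexp0 i])
    rw [Real.norm_eq_abs, abs_le]
    constructor
    · have : (0:ℝ) ≤ ∑ i, Real.exp (-(c i) * t) := Finset.sum_nonneg (fun i _ => hexp0 i)
      linarith
    · linarith

/-- With i.i.d. Exponential(μ) service times, the balanced assignment (each of the `B`
non-overlapping batches replicated on `N/B` workers) minimizes the average job compute time:
for any assignment `v` with `v i ≥ 1` and `∑ i, v i = N`,
`∫₀^∞ (1 - (1 - e^{-(N/B)μt})^B) dt ≤ ∫₀^∞ (1 - ∏ i, (1 - e^{-vᵢμt})) dt`. -/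
theorem balanced_assignment_optimal_exponential
    (μ : ℝ) (hμ : 0 < μ) (B N : ℕ) (hB : 0 < B) (hN : 0 < N) (hdvd : B ∣ N)
    (v : Fin B → ℕ) (hv : ∀ i, 1 ≤ v i) (hsum : ∑ i, v i = N) :
    (∫ t in Set.Ioi (0 : ℝ), (1 - (1 - Real.exp (-((N : ℝ) / (B : ℝ)) * μ * t)) ^ B)) ≤
      ∫ t in Set.Ioi (0 : ℝ), (1 - ∏ i, (1 - Real.exp (-(v i : ℝ) * μ * t))) := by
  have hB' : (0:ℝ) < B := Nat.cast_pos.mpr hB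
  have hN' : (0:ℝ) < N := Nat.cast_pos.mpr hN
  set c : Fin B → ℝ := fun i => (v i : ℝ) * μ with hc
  have hcpos : ∀ i, 0 < c i := fun i =>
    mul_pos (by exact_mod_cast Nat.lt_of_lt_of_le Nat.zero_lt_one (hv i)) hμ
  have hsc : (∑ i, c i) / B = (N : ℝ) / B * μ := by
    simp only [hc, ← Finset.sum_mul]
    rw [← Nat.cast_sum, hsum]
    ring
  -- balanced side as a function of the same shape
  have hbal : ∀ t : ℝ, (1 : ℝ) - (1 - Real.exp (-((N : ℝ) / (B : ℝ)) * μ * t)) ^ B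
      = 1 - ∏ _i : Fin B, (1 - Real.exp (-((N : ℝ) / (B : ℝ) * μ) * t)) := by
    intro t
    rw [Finset.prod_const, Finset.card_univ, Fintype.card_fin]
    ring_nf
  have hintR : IntegrableOn (fun t => 1 - ∏ i, (1 - Real.exp (-(c i) * t))) (Set.Ioi (0:ℝ)) :=
    aux_integrable c hcpos
  have hintL : IntegrableOn
      (fun t => 1 - ∏ _i : Fin B, (1 - Real.exp (-((N : ℝ) / (B : ℝ) * μ) * t)))
      (Set.Ioi (0:ℝ)) :=
    aux_integrable (fun _ => (N : ℝ) / (B : ℝ) * μ) (fun _ => by positivity)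
  have heq : ∀ t : ℝ, (1 : ℝ) - (1 - Real.exp (-((N : ℝ) / (B : ℝ)) * μ * t)) ^ B
      = (fun t => 1 - ∏ _i : Fin B, (1 - Real.exp (-((N : ℝ) / (B : ℝ) * μ) * t))) t := hbal
  calc (∫ t in Set.Ioi (0 : ℝ), (1 - (1 - Real.exp (-((N : ℝ) / (B : ℝ)) * μ * t)) ^ B))
      = ∫ t in Set.Ioi (0 : ℝ),
          (1 - ∏ _i : Fin B, (1 - Real.exp (-((N : ℝ) / (B : ℝ) * μ) * t))) := by
        exact integral_congr_ae (Filter.Eventually.of_forall heq)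
    _ ≤ ∫ t in Set.Ioi (0 : ℝ), (1 - ∏ i, (1 - Real.exp (-(c i) * t))) := by
        apply setIntegral_mono_on hintL hintR measurableSet_Ioi
        intro t ht
        have := aux_key hB c (fun i => (hcpos i).le) t (le_of_lt (Set.mem_Ioi.mp ht))
        rw [hsc] at this
        have hpowprod : (1 - Real.exp (-((N : ℝ) / (B : ℝ) * μ) * t)) ^ B
            = ∏ _i : Fin B, (1 - Real.exp (-((N : ℝ) / (B : ℝ) * μ) * t)) := by
          rw [Finset.prod_const, Finset.card_univ, Fintype.card_fin]
        rw [← hpowprod]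
        linarith
    _ = ∫ t in Set.Ioi (0 : ℝ), (1 - ∏ i, (1 - Real.exp (-(v i : ℝ) * μ * t))) := by
        apply integral_congr_ae (Filter.Eventually.of_forall _)
        intro t
        simp only [hc]
        congr 1
        apply Finset.prod_congr rfl
        intro i _
        ring_nf
end

section
/- Let μ > 0 and Δ > 0 be real, let B and N be positive integers with B dividing N, and let v : Fin B → ℕ have entries v_i ≥ 1 with ∑_{i=1}^{B} v_i = N. Define F_i(t) = 0 for t < Δ and F_i(t) = 1 − e^{−v_i μ (t−Δ)} for t ≥ Δ, and F_bal(t) = 0 for t < Δ and F_bal(t) = 1 − e^{−(N/B) μ (t−Δ)} for t ≥ Δ. Then ∫_0^∞ (1 − ∏_{i=1}^{B} F_i(t)) dt ≥ ∫_0^∞ (1 − F_bal(t)^B) dt. (That is, with shifted-exponential SExp(Δ, μ) service times at workers, the balanced assignment of non-overlapping batches achieves the minimum average job compute time.) -/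
/-!
For `t ≥ Δ` the batch CDFs are `1 - exp (-vᵢ μ (t - Δ))`. By AM-GM their product is at most the
`B`-th power of their mean `1 - mean (exp (-vᵢ μ (t - Δ)))`, and by Jensen's inequality for `exp`
that mean exponential is at least `exp (-(N / B) μ (t - Δ))`. So the balanced job CDF dominates
every other one pointwise, and integrating the tails gives the claim; the tail of an unbalanced
assignment is integrable since it is bounded by the sum of the exponential batch tails.
-/

open Finset MeasureTheory Real

section MeanInequalities

variable {ι : Type*} (s : Finset ι)

theorem Real.prod_le_mean_pow (hs : s.Nonempty) (z : ι → ℝ) (hz : ∀ i ∈ s, 0 ≤ z i) :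
    ∏ i ∈ s, z i ≤ ((∑ i ∈ s, z i) / #s) ^ #s := by
  have hcard : (0 : ℝ) < #s := by exact_mod_cast hs.card_pos
  have amgm := geom_mean_le_arith_mean_weighted s (fun _ ↦ (#s : ℝ)⁻¹) z
    (fun _ _ ↦ by positivity) (by simp [hcard.ne']) hz
  rw [finsetProd_rpow s z hz, ← mul_sum, inv_mul_eq_div,
    rpow_inv_le_iff_of_pos (prod_nonneg hz) (by positivity [sum_nonneg hz]) hcard] at amgm
  exact_mod_cast amgm

theorem Real.exp_mean_le_mean_exp (hs : s.Nonempty) (x : ι → ℝ) :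
    exp ((∑ i ∈ s, x i) / #s) ≤ (∑ i ∈ s, exp (x i)) / #s := by
  have hcard : (0 : ℝ) < #s := by exact_mod_cast hs.card_pos
  have jensen := convexOn_exp.map_sum_le (t := s) (w := fun _ ↦ (#s : ℝ)⁻¹) (p := x)
    (fun _ _ ↦ by positivity) (by simp [hcard.ne']) (fun _ _ ↦ Set.mem_univ _)
  simp only [smul_eq_mul] at jensen
  rwa [← mul_sum, ← mul_sum, inv_mul_eq_div, inv_mul_eq_div] at jensen

theorem Real.prod_one_sub_exp_neg_le (hs : s.Nonempty) (x : ι → ℝ) (hx : ∀ i ∈ s, 0 ≤ x i) :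
    ∏ i ∈ s, (1 - exp (-x i)) ≤ (1 - exp (-(∑ i ∈ s, x i) / #s)) ^ #s := by
  have hcard : (#s : ℝ) ≠ 0 := by exact_mod_cast hs.card_pos.ne'
  have hterm : ∀ i ∈ s, 0 ≤ 1 - exp (-x i) := fun i hi ↦
    sub_nonneg.2 (exp_le_one_iff.2 (neg_nonpos.2 (hx i hi)))
  have hmean : (∑ i ∈ s, (1 - exp (-x i))) / #s = 1 - (∑ i ∈ s, exp (-x i)) / #s := by
    rw [sum_sub_distrib, sum_const, nsmul_one, sub_div, div_self hcard]
  calc ∏ i ∈ s, (1 - exp (-x i))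
      ≤ ((∑ i ∈ s, (1 - exp (-x i))) / #s) ^ #s := prod_le_mean_pow s hs _ hterm
    _ ≤ (1 - exp (-(∑ i ∈ s, x i) / #s)) ^ #s := by
      refine pow_le_pow_left₀ (div_nonneg (sum_nonneg hterm) (Nat.cast_nonneg _)) ?_ _
      rw [hmean, ← sum_neg_distrib]
      exact sub_le_sub_left (exp_mean_le_mean_exp s hs _) 1

theorem Finset.one_sub_prod_le_sum_one_sub {R : Type*} [CommRing R] [PartialOrder R]
    [IsOrderedRing R] (a : ι → R) (h0 : ∀ i ∈ s, 0 ≤ a i) (h1 : ∀ i ∈ s, a i ≤ 1) :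
    1 - ∏ i ∈ s, a i ≤ ∑ i ∈ s, (1 - a i) := by
  classical
  induction s using Finset.induction_on with
  | empty => simp
  | insert j s hj ih =>
    simp only [mem_insert, forall_eq_or_imp] at h0 h1
    rw [prod_insert hj, sum_insert hj]
    have hprod : ∏ i ∈ s, a i ≤ 1 := prod_le_one h0.2 h1.2
    have := mul_nonneg (sub_nonneg.2 h1.1) (sub_nonneg.2 hprod)
    linear_combination this + ih h0.2 h1.2

end MeanInequalities

theorem integrableOn_exp_neg_mul_sub {r : ℝ} (hr : 0 < r) (a Δ : ℝ) :
    IntegrableOn (fun t ↦ exp (-r * (t - Δ))) (Set.Ioi a) :=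
  IntegrableOn.congr_fun ((exp_neg_integrableOn_Ioi a hr).const_mul (exp (r * Δ)))
    (fun t _ ↦ by rw [← exp_add]; ring_nf) measurableSet_Ioi

/-- The CDF of `SExp(Δ, n μ)`. The worker count `n` is real so that both the balanced `N / B` and
the `vᵢ` are instances. -/
noncomputable def sexpCDF (Δ μ n t : ℝ) : ℝ :=
  if t < Δ then 0 else 1 - exp (-n * μ * (t - Δ))

section sexpCDF

variable {Δ μ : ℝ}

theorem measurable_sexpCDF (n : ℝ) : Measurable (sexpCDF Δ μ n) :=
  Measurable.ite (measurableSet_lt measurable_id measurable_const) measurable_const (by fun_prop)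

theorem sexpCDF_nonneg (hμ : 0 ≤ μ) {n : ℝ} (hn : 0 ≤ n) (t : ℝ) : 0 ≤ sexpCDF Δ μ n t := by
  unfold sexpCDF
  split_ifs with ht
  · rfl
  · rw [sub_nonneg, exp_le_one_iff, neg_mul, neg_mul, neg_nonpos]
    exact mul_nonneg (mul_nonneg hn hμ) (by linarith [not_lt.1 ht])

theorem sexpCDF_le_one (n t : ℝ) : sexpCDF Δ μ n t ≤ 1 := by
  unfold sexpCDF
  split_ifs
  · exact zero_le_one
  · linarith [exp_pos (-n * μ * (t - Δ))]

theorem one_sub_sexpCDF_le_exp (hμ : 0 ≤ μ) {n : ℝ} (hn : 0 ≤ n) (t : ℝ) :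
    1 - sexpCDF Δ μ n t ≤ exp (-(n * μ) * (t - Δ)) := by
  unfold sexpCDF
  split_ifs with ht
  · rw [sub_zero, one_le_exp_iff, neg_mul_comm, neg_sub]
    exact mul_nonneg (mul_nonneg hn hμ) (by linarith)
  · simp [neg_mul]

theorem prod_sexpCDF_le_pow {ι : Type*} {s : Finset ι} (hs : s.Nonempty) (hμ : 0 ≤ μ)
    {n : ι → ℝ} (hn : ∀ i ∈ s, 0 ≤ n i) (t : ℝ) :
    ∏ i ∈ s, sexpCDF Δ μ (n i) t ≤ sexpCDF Δ μ ((∑ i ∈ s, n i) / #s) t ^ #s := by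
  unfold sexpCDF
  split_ifs with ht
  · simp [hs.ne_empty]
  · have hx : ∀ i ∈ s, 0 ≤ n i * μ * (t - Δ) := fun i hi ↦
      mul_nonneg (mul_nonneg (hn i hi) hμ) (by linarith)
    have hexp : ∀ i, -n i * μ * (t - Δ) = -(n i * μ * (t - Δ)) := fun i ↦ by ring
    have hmean : -((∑ i ∈ s, n i) / #s) * μ * (t - Δ) = -(∑ i ∈ s, n i * μ * (t - Δ)) / #s := by
      rw [← sum_mul, ← sum_mul]; ring
    simpa only [hexp, hmean] using prod_one_sub_exp_neg_le s hs _ hx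

theorem integrableOn_one_sub_prod_sexpCDF {ι : Type*} {s : Finset ι} (hμ : 0 < μ)
    {n : ι → ℝ} (hn : ∀ i ∈ s, 0 < n i) (a : ℝ) :
    IntegrableOn (fun t ↦ 1 - ∏ i ∈ s, sexpCDF Δ μ (n i) t) (Set.Ioi a) := by
  have htails := integrable_finsetSum s fun i hi ↦
    integrableOn_exp_neg_mul_sub (mul_pos (hn i hi) hμ) a Δ
  have hmeas : Measurable fun t ↦ 1 - ∏ i ∈ s, sexpCDF Δ μ (n i) t :=
    measurable_const.sub (Finset.measurable_prod s fun i _ ↦ measurable_sexpCDF (n i))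
  refine htails.mono' hmeas.aestronglyMeasurable (ae_of_all _ fun t ↦ ?_)
  have h0 : ∀ i ∈ s, 0 ≤ sexpCDF Δ μ (n i) t := fun i hi ↦ sexpCDF_nonneg hμ.le (hn i hi).le t
  have h1 : ∀ i ∈ s, sexpCDF Δ μ (n i) t ≤ 1 := fun i _ ↦ sexpCDF_le_one _ t
  rw [Real.norm_of_nonneg (sub_nonneg.2 (prod_le_one h0 h1))]
  refine (one_sub_prod_le_sum_one_sub s _ h0 h1).trans (sum_le_sum fun i hi ↦ ?_)
  exact one_sub_sexpCDF_le_exp hμ.le (hn i hi).le t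

end sexpCDF

theorem balanced_assignment_optimal_shifted_exponential_general
    (μ Δ : ℝ) (hμ : 0 < μ)
    (B N : ℕ) (hB : 0 < B)
    (v : Fin B → ℕ) (hv : ∀ i, 1 ≤ v i) (hsum : ∑ i, v i = N) :
    (∫ t in Set.Ioi (0 : ℝ),
        (1 - (if t < Δ then (0 : ℝ)
              else 1 - Real.exp (-((N : ℝ) / (B : ℝ)) * μ * (t - Δ))) ^ B)) ≤
      ∫ t in Set.Ioi (0 : ℝ),
        (1 - ∏ i, (if t < Δ then (0 : ℝ)
                   else 1 - Real.exp (-(v i : ℝ) * μ * (t - Δ)))) := by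
  change ∫ t in Set.Ioi 0, (1 - sexpCDF Δ μ (N / B) t ^ B) ≤
    ∫ t in Set.Ioi 0, (1 - ∏ i, sexpCDF Δ μ (v i) t)
  have hv_pos : ∀ i ∈ univ, (0 : ℝ) < v i := fun i _ ↦ by exact_mod_cast hv i
  have hbalanced : (∑ i, (v i : ℝ)) / #(univ : Finset (Fin B)) = N / B := by
    rw [card_univ, Fintype.card_fin, ← hsum, Nat.cast_sum]
  refine integral_mono_of_nonneg (ae_of_all _ fun t ↦ ?_)
    (integrableOn_one_sub_prod_sexpCDF hμ hv_pos 0) (ae_of_all _ fun t ↦ ?_)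
  · exact sub_nonneg.2 (pow_le_one₀ (sexpCDF_nonneg hμ.le (by positivity) t) (sexpCDF_le_one _ t))
  · have hdominated := prod_sexpCDF_le_pow (Δ := Δ) (univ_nonempty_iff.2 ⟨⟨0, hB⟩⟩) hμ.le
      (fun i hi ↦ (hv_pos i hi).le) t
    rw [hbalanced, card_univ, Fintype.card_fin] at hdominated
    exact sub_le_sub_left hdominated 1

/-- With i.i.d. shifted-exponential SExp(Δ, μ) service times, the balanced assignment of
non-overlapping batches minimizes the average job compute time. Here `Fᵢ` is the CDF of the
compute time of a batch hosted by `v i` workers, and `F_bal` is that of a balanced batch. -/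
theorem balanced_assignment_optimal_shifted_exponential
    (μ Δ : ℝ) (hμ : 0 < μ) (hΔ : 0 < Δ)
    (B N : ℕ) (hB : 0 < B) (hN : 0 < N) (hdvd : B ∣ N)
    (v : Fin B → ℕ) (hv : ∀ i, 1 ≤ v i) (hsum : ∑ i, v i = N) :
    (∫ t in Set.Ioi (0 : ℝ),
        (1 - (if t < Δ then (0 : ℝ)
              else 1 - Real.exp (-((N : ℝ) / (B : ℝ)) * μ * (t - Δ))) ^ B)) ≤
      ∫ t in Set.Ioi (0 : ℝ),
        (1 - ∏ i, (if t < Δ then (0 : ℝ)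
                   else 1 - Real.exp (-(v i : ℝ) * μ * (t - Δ)))) :=
  balanced_assignment_optimal_shifted_exponential_general μ Δ hμ B N hB v hv hsum
end

section
/- Let X_1, …, X_6 be i.i.d. integrable real random variables on a probability space. Define the job compute times of the three batching schemes: T¹ = min( max(X_3, X_5), max(X_2, max(X_4, X_6)) ) (cyclic overlapping), T² = min( max(X_3, min(X_5, X_6)), max(max(X_2, X_4), min(X_5, X_6)) ) (mixed overlapping/non-overlapping), and T³ = max( min(X_3, X_4), min(X_5, X_6) ) (non-overlapping). Then E[T³] ≤ E[T²] ≤ E[T¹]. In particular, regardless of the service-time distribution, the balanced assignment of non-overlapping batches achieves average job compute time no larger than that of the overlapping batching schemes. -/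
open MeasureTheory ProbabilityTheory

/-! The three job compute times are ordered sample path by sample path, `T³ ≤ T² ≤ T¹`, so
the expectations are ordered by monotonicity of the integral.
Pointwise: `T² = (x₃ ⊓ (x₂ ⊔ x₄)) ⊔ (x₅ ⊓ x₆)` by distributivity, which dominates
`(x₃ ⊓ x₄) ⊔ (x₅ ⊓ x₆)`; and each argument of the outer `⊓` in `T²` is below the corresponding
one in `T¹`, since `x₅ ⊓ x₆ ≤ x₅, x₆`. -/

section Lattice

variable {α : Type*}

theorem nonoverlapping_le_mixed [DistribLattice α] (x₂ x₃ x₄ x₅ x₆ : α) :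
    (x₃ ⊓ x₄) ⊔ (x₅ ⊓ x₆) ≤ (x₃ ⊔ (x₅ ⊓ x₆)) ⊓ ((x₂ ⊔ x₄) ⊔ (x₅ ⊓ x₆)) := by
  rw [← sup_inf_right]
  exact sup_le_sup_right (inf_le_inf_left _ le_sup_right) _

theorem mixed_le_cyclic [Lattice α] (x₂ x₃ x₄ x₅ x₆ : α) :
    (x₃ ⊔ (x₅ ⊓ x₆)) ⊓ ((x₂ ⊔ x₄) ⊔ (x₅ ⊓ x₆)) ≤ (x₃ ⊔ x₅) ⊓ (x₂ ⊔ (x₄ ⊔ x₆)) := by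
  refine inf_le_inf (sup_le_sup_left inf_le_left _) ?_
  rw [← sup_assoc]
  exact sup_le_sup_left inf_le_right _

end Lattice

theorem nonoverlapping_beats_overlapping_general
    {Ω : Type*} [MeasureSpace Ω]
    (X : Fin 6 → Ω → ℝ)
    (hint : ∀ i, Integrable (X i) ℙ) :
    (∫ ω, max (min (X 2 ω) (X 3 ω)) (min (X 4 ω) (X 5 ω))) ≤
      (∫ ω, min (max (X 2 ω) (min (X 4 ω) (X 5 ω)))
                (max (max (X 1 ω) (X 3 ω)) (min (X 4 ω) (X 5 ω)))) ∧
    (∫ ω, min (max (X 2 ω) (min (X 4 ω) (X 5 ω)))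
              (max (max (X 1 ω) (X 3 ω)) (min (X 4 ω) (X 5 ω)))) ≤
      (∫ ω, min (max (X 2 ω) (X 4 ω)) (max (X 1 ω) (max (X 3 ω) (X 5 ω)))) := by
  have hT₁ := ((hint 2).sup (hint 4)).inf ((hint 1).sup ((hint 3).sup (hint 5)))
  have hT₂ := ((hint 2).sup ((hint 4).inf (hint 5))).inf
    (((hint 1).sup (hint 3)).sup ((hint 4).inf (hint 5)))
  have hT₃ := ((hint 2).inf (hint 3)).sup ((hint 4).inf (hint 5))
  exact ⟨integral_mono hT₃ hT₂ fun _ => nonoverlapping_le_mixed _ _ _ _ _,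
    integral_mono hT₂ hT₁ fun _ => mixed_le_cyclic _ _ _ _ _⟩

/-- For i.i.d. integrable batch service times `X 0, …, X 5` (representing `X_1, …, X_6`),
the expected job compute times of the three batching schemes satisfy
`E[T³] ≤ E[T²] ≤ E[T¹]`, where
`T¹ = min(max(X_3, X_5), max(X_2, max(X_4, X_6)))` (cyclic overlapping),
`T² = min(max(X_3, min(X_5, X_6)), max(max(X_2, X_4), min(X_5, X_6)))` (mixed), and
`T³ = max(min(X_3, X_4), min(X_5, X_6))` (non-overlapping). -/
theorem nonoverlapping_beats_overlapping
    {Ω : Type*} [MeasureSpace Ω] [IsProbabilityMeasure (ℙ : Measure Ω)]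
    (X : Fin 6 → Ω → ℝ)
    (hmeas : ∀ i, Measurable (X i))
    (hint : ∀ i, Integrable (X i) ℙ)
    (hindep : iIndepFun X ℙ)
    (hident : ∀ i j, IdentDistrib (X i) (X j) ℙ ℙ) :
    (∫ ω, max (min (X 2 ω) (X 3 ω)) (min (X 4 ω) (X 5 ω))) ≤
      (∫ ω, min (max (X 2 ω) (min (X 4 ω) (X 5 ω)))
                (max (max (X 1 ω) (X 3 ω)) (min (X 4 ω) (X 5 ω)))) ∧
    (∫ ω, min (max (X 2 ω) (min (X 4 ω) (X 5 ω)))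
              (max (max (X 1 ω) (X 3 ω)) (min (X 4 ω) (X 5 ω)))) ≤
      (∫ ω, min (max (X 2 ω) (X 4 ω)) (max (X 1 ω) (max (X 3 ω) (X 5 ω)))) :=
  nonoverlapping_beats_overlapping_general X hint
end

section
/- Let N be a positive integer and Δ, μ > 0 be reals with Δμ < 1/N. Define f : ℕ → ℝ by f(B) = NΔ/B + (1/μ) H_{B,1}. Then f is strictly increasing on the positive integers: for all integers 1 ≤ B₁ < B₂, f(B₁) < f(B₂). In particular, among all positive integers B ≤ N, the average job compute time f(B) is minimized uniquely at B = 1, i.e., at full diversity. -/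
open Finset

lemma fd_step (N : ℕ) (Δ μ : ℝ) (hΔ : 0 < Δ) (hμ : 0 < μ)
    (hND : (N : ℝ) * Δ < 1 / μ) (B : ℕ) (hB : 1 ≤ B) :
    (N : ℝ) * Δ / (B : ℝ) + (1 / μ) * ∑ k ∈ Finset.range B, (1 : ℝ) / (k + 1)
      < (N : ℝ) * Δ / ((B : ℝ) + 1) + (1 / μ) * ∑ k ∈ Finset.range (B + 1), (1 : ℝ) / (k + 1) := by
  rw [Finset.sum_range_succ]
  have hB0 : (0 : ℝ) < B := by exact_mod_cast hB
  have hB1 : (0 : ℝ) < (B : ℝ) + 1 := by linarith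
  have h1 : (N : ℝ) * Δ / (B : ℝ) - (N : ℝ) * Δ / ((B : ℝ) + 1)
      = (N : ℝ) * Δ / ((B : ℝ) * ((B : ℝ) + 1)) := by
    field_simp
    ring
  have hNnn : (0 : ℝ) ≤ (N : ℝ) * Δ := by positivity
  have key : (N : ℝ) * Δ / ((B : ℝ) * ((B : ℝ) + 1)) < 1 / μ * (1 / ((B : ℝ) + 1)) := by
    calc (N : ℝ) * Δ / ((B : ℝ) * ((B : ℝ) + 1)) ≤ (N : ℝ) * Δ / (1 * ((B : ℝ) + 1)) := by
          have hle : (1 : ℝ) * ((B : ℝ) + 1) ≤ (B : ℝ) * ((B : ℝ) + 1) := by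
            have : (1 : ℝ) ≤ (B : ℝ) := by exact_mod_cast hB
            nlinarith
          exact div_le_div_of_nonneg_left hNnn (by positivity) hle
      _ < 1 / μ * (1 / ((B : ℝ) + 1)) := by
          rw [one_mul, div_lt_iff₀ hB1] at *
          have : 1 / μ * (1 / ((B : ℝ) + 1)) * ((B : ℝ) + 1) = 1 / μ := by
            field_simp
          rw [this]
          exact hND
  rw [mul_add]
  linarith


/-- If `Δμ < 1/N`, then `f(B) = NΔ/B + (1/μ) H_{B,1}` (the average job compute time with `B`
balanced non-overlapping batches under SExp(Δ, μ) service times) is strictly increasing on the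
positive integers; in particular it is minimized uniquely at full diversity `B = 1`. -/
theorem full_diversity_optimal_shifted_exponential
    (N : ℕ) (hN : 0 < N) (Δ μ : ℝ) (hΔ : 0 < Δ) (hμ : 0 < μ)
    (h : Δ * μ < 1 / (N : ℝ))
    (B₁ B₂ : ℕ) (hB₁ : 1 ≤ B₁) (hB₁₂ : B₁ < B₂) :
    (N : ℝ) * Δ / (B₁ : ℝ) + (1 / μ) * ∑ k ∈ Finset.range B₁, (1 : ℝ) / (k + 1)
      < (N : ℝ) * Δ / (B₂ : ℝ) + (1 / μ) * ∑ k ∈ Finset.range B₂, (1 : ℝ) / (k + 1) := by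
  have hN0 : (0 : ℝ) < N := by exact_mod_cast hN
  have hND : (N : ℝ) * Δ < 1 / μ := by
    rw [lt_div_iff₀ hμ]
    have := (lt_div_iff₀ hN0).mp h
    nlinarith
  induction B₂, hB₁₂ using Nat.le_induction with
  | base =>
      have := fd_step N Δ μ hΔ hμ hND B₁ hB₁
      simpa [Nat.cast_add, Nat.cast_one] using this
  | succ n hn ih =>
      refine ih.trans ?_
      have := fd_step N Δ μ hΔ hμ hND n (le_trans hB₁ (Nat.le_of_succ_le hn))
      simpa [Nat.cast_add, Nat.cast_one] using this
end

section
/- Let N ≥ 4 be an even integer and Δ, μ > 0 be reals with Δμ > ∑_{k=N/2+1}^{N} 1/k. Define f : ℕ → ℝ by f(B) = NΔ/B + (1/μ) H_{B,1}. Then for every positive divisor B of N with B ≠ N, f(N) < f(B). In particular, among the feasible redundancy levels (positive divisors of N), the average job compute time is minimized uniquely at B = N, i.e., at full parallelism. -/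
open Finset

/-!
Write `N = m B` with `m ≥ 2`. Then `f(B) - f(N) = (m - 1) Δ - (H_N - H_B) / μ`, and
`H_N - H_B` is the sum of the `m - 1` blocks `H_{(j+1)B} - H_{jB}`, `1 ≤ j < m`. Each block is at
most the first one, `H_{2B} - H_B`, and since `n ↦ H_{2n} - H_n` is monotone and `B ≤ N / 2`, the
first block is at most `H_N - H_{N/2} < Δ μ`.
-/

lemma harmonic_sub_harmonic_le_of_le {a b : ℕ} (hab : a ≤ b) (n : ℕ) :
    harmonic (b + n) - harmonic b ≤ harmonic (a + n) - harmonic a := by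
  induction n with
  | zero => simp
  | succ n ih =>
    have hstep : ((↑(b + n + 1) : ℚ))⁻¹ ≤ (↑(a + n + 1))⁻¹ :=
      inv_anti₀ (by positivity) (by exact_mod_cast (by omega : a + n + 1 ≤ b + n + 1))
    simp only [← add_assoc, harmonic_succ]
    linarith

lemma harmonic_add_one_mul_sub_harmonic_le (B m : ℕ) :
    harmonic ((m + 1) * B) - harmonic B ≤ m * (harmonic (2 * B) - harmonic B) := by
  induction m with
  | zero => simp
  | succ m ih =>
    have hblock := harmonic_sub_harmonic_le_of_le (Nat.le_mul_of_pos_left B m.succ_pos) B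
    rw [← add_one_mul, ← two_mul] at hblock
    push_cast
    linarith

lemma monotone_harmonic_two_mul_sub_harmonic :
    Monotone fun n : ℕ => harmonic (2 * n) - harmonic n := by
  refine monotone_nat_of_le_succ fun n => ?_
  have hstep : ((↑(n + 1) : ℚ))⁻¹ ≤ (↑(2 * n + 1))⁻¹ + (↑(2 * n + 1 + 1))⁻¹ := by
    push_cast
    rw [inv_eq_one_div, inv_eq_one_div, inv_eq_one_div,
      div_add_div _ _ (by positivity) (by positivity),
      div_le_div_iff₀ (by positivity) (by positivity)]
    nlinarith
  simp only [mul_add, mul_one, harmonic_succ, show 2 * n + 2 = 2 * n + 1 + 1 from rfl]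
  linarith

lemma harmonic_mul_sub_harmonic_le {B m n : ℕ} (hm : 1 ≤ m) (hBn : B ≤ n) :
    harmonic (m * B) - harmonic B ≤ (m - 1) * (harmonic (2 * n) - harmonic n) := by
  obtain ⟨m, rfl⟩ := Nat.exists_eq_add_of_le' hm
  calc harmonic ((m + 1) * B) - harmonic B ≤ m * (harmonic (2 * B) - harmonic B) :=
        harmonic_add_one_mul_sub_harmonic_le B m
    _ ≤ m * (harmonic (2 * n) - harmonic n) :=
        mul_le_mul_of_nonneg_left (monotone_harmonic_two_mul_sub_harmonic hBn) (by positivity)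
    _ = ((m + 1 : ℕ) - 1 : ℚ) * (harmonic (2 * n) - harmonic n) := by push_cast; ring

lemma harmonic_cast_eq_sum_range (n : ℕ) :
    (harmonic n : ℝ) = ∑ k ∈ range n, (1 : ℝ) / (k + 1) := by
  simp [harmonic, one_div]

lemma harmonic_sub_harmonic_cast_eq_sum_Icc {a b : ℕ} (hab : a ≤ b) :
    (harmonic b - harmonic a : ℝ) = ∑ k ∈ Icc (a + 1) b, (1 : ℝ) / k := by
  induction b, hab using Nat.le_induction with
  | base => simp
  | succ b hab ih =>
    rw [Icc_add_one_left_eq_Ioc] at ih ⊢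
    rw [sum_Ioc_succ_top (by omega), ← ih, harmonic_succ]
    push_cast
    ring

theorem full_parallelism_optimal_shifted_exponential_general
    (N : ℕ) (hN : 4 ≤ N) (hNeven : Even N) (Δ μ : ℝ) (hμ : 0 < μ)
    (h : ∑ k ∈ Finset.Icc (N / 2 + 1) N, (1 : ℝ) / (k : ℝ) < Δ * μ)
    (B : ℕ) (hBdvd : B ∣ N) (hBne : B ≠ N) :
    (N : ℝ) * Δ / (N : ℝ) + (1 / μ) * ∑ k ∈ Finset.range N, (1 : ℝ) / (k + 1)
      < (N : ℝ) * Δ / (B : ℝ) + (1 / μ) * ∑ k ∈ Finset.range B, (1 : ℝ) / (k + 1) := by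
  obtain ⟨m, hm⟩ := hBdvd
  have hB : B ≠ 0 := by rintro rfl; omega
  have hm2 : 2 ≤ m := by
    rcases m with _ | _ | m <;> omega
  have hBhalf : B ≤ N / 2 := by
    have : 2 * B ≤ N := by rw [hm]; nlinarith
    omega
  have hgap : (harmonic N : ℝ) - harmonic B < (m - 1) * (Δ * μ) := by
    have key := harmonic_mul_sub_harmonic_le (by omega : 1 ≤ m) hBhalf
    rw [mul_comm, ← hm, Nat.two_mul_div_two_of_even hNeven] at key
    rw [← harmonic_sub_harmonic_cast_eq_sum_Icc (Nat.div_le_self N 2)] at h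
    have hm1 : (1 : ℝ) < m := by exact_mod_cast hm2
    calc (harmonic N : ℝ) - harmonic B ≤ (m - 1) * (harmonic N - harmonic (N / 2) : ℝ) := by
          exact_mod_cast key
      _ < (m - 1) * (Δ * μ) := by gcongr
  have hNΔ : (N : ℝ) * Δ / B = m * Δ := by
    rw [hm]; push_cast; field_simp
  have hscaled : 1 / μ * ((harmonic N : ℝ) - harmonic B) < (m - 1) * Δ := by
    rw [one_div_mul_eq_div, div_lt_iff₀ hμ]
    linarith
  rw [← harmonic_cast_eq_sum_range, ← harmonic_cast_eq_sum_range,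
    mul_div_cancel_left₀ _ (by positivity), hNΔ]
  linarith

/-- If `N ≥ 4` is even and `Δμ > ∑_{k=N/2+1}^N 1/k`, then the average job compute time
`f(B) = NΔ/B + (1/μ) H_{B,1}` is minimized uniquely at full parallelism `B = N` among the
feasible redundancy levels (positive divisors `B` of `N`). -/
theorem full_parallelism_optimal_shifted_exponential
    (N : ℕ) (hN : 4 ≤ N) (hNeven : Even N) (Δ μ : ℝ) (hΔ : 0 < Δ) (hμ : 0 < μ)
    (h : ∑ k ∈ Finset.Icc (N / 2 + 1) N, (1 : ℝ) / (k : ℝ) < Δ * μ)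
    (B : ℕ) (hB : 0 < B) (hBdvd : B ∣ N) (hBne : B ≠ N) :
    (N : ℝ) * Δ / (N : ℝ) + (1 / μ) * ∑ k ∈ Finset.range N, (1 : ℝ) / (k + 1)
      < (N : ℝ) * Δ / (B : ℝ) + (1 / μ) * ∑ k ∈ Finset.range B, (1 : ℝ) / (k + 1) :=
  full_parallelism_optimal_shifted_exponential_general N hN hNeven Δ μ hμ h B hBdvd hBne
end

section
/- Let Δ' ≥ 0 and μ > 0 be real, let B ≥ 1 be an integer, and let T_1, …, T_B be independent, identically distributed real random variables, each with the shifted-exponential distribution SExp(Δ', μ). Let M = max(T_1, …, T_B). Then the coefficient of variations of M satisfies √(Var[M]) / E[M] = √(H_{B,2}) / (Δ'μ + H_{B,1}). In particular, with Δ' = NΔ/B this gives CoV[T] = √(H_{B,2}) / (NΔμ/B + H_{B,1}). -/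
/-!
Write `Y = M - Δ'`: it is the maximum of `B` i.i.d. `Exp(μ)` variables, with tail
`ρ(t) = 1 - (1 - e^{-μt})^B = ∑_{k<B} e^{-μt} (1 - e^{-μt})^k`. The layer-cake formulas
`E[Y] = ∫ ρ` and `E[Y²] = 2 ∫ t ρ(t) dt` reduce everything to the integrals
`∫ e^{-μt} (1 - e^{-μt})^k dt = 1 / ((k+1)μ)` and, integrating by parts against the antiderivative
`-ρ_{k+1} / ((k+1)μ)`, `∫ t e^{-μt} (1 - e^{-μt})^k dt = H_{k+1,1} / ((k+1)μ²)`. Summing over `k`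
gives `E[Y] = H_{B,1}/μ` and `E[Y²] = (H_{B,1}² + H_{B,2})/μ²`, so `Var M = Var Y = H_{B,2}/μ²`.
-/

open MeasureTheory ProbabilityTheory Finset
open Real Filter Set Topology

/-- `harmonicSum p n` is the generalized harmonic number `H_{n,p}`. -/
noncomputable def harmonicSum (p n : ℕ) : ℝ := ∑ k ∈ range n, 1 / ((k : ℝ) + 1) ^ p

lemma harmonicSum_succ (p n : ℕ) :
    harmonicSum p (n + 1) = harmonicSum p n + 1 / ((n : ℝ) + 1) ^ p :=
  sum_range_succ _ _

lemma sum_harmonicSum_succ_div (n : ℕ) :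
    ∑ k ∈ range n, harmonicSum 1 (k + 1) / ((k : ℝ) + 1)
      = (harmonicSum 1 n ^ 2 + harmonicSum 2 n) / 2 := by
  induction n with
  | zero => simp [harmonicSum]
  | succ n ih =>
    rw [sum_range_succ, ih, harmonicSum_succ, harmonicSum_succ]
    field_simp
    ring

/-- The tail `t ↦ P(Y > t)` of the maximum `Y` of `n` i.i.d. `Exp(μ)` random variables. -/
noncomputable def maxExpTail (μ : ℝ) (n : ℕ) (t : ℝ) : ℝ := 1 - (1 - exp (-μ * t)) ^ n

section MaxExpTail

variable {μ : ℝ}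

lemma one_sub_exp_neg_mul_mem_Icc (hμ : 0 ≤ μ) {t : ℝ} (ht : 0 ≤ t) :
    1 - exp (-μ * t) ∈ Icc (0 : ℝ) 1 := by
  have : exp (-μ * t) ≤ 1 := exp_le_one_iff.mpr (by nlinarith)
  exact ⟨by linarith, by linarith [exp_pos (-μ * t)]⟩

lemma maxExpTail_eq_sum (μ : ℝ) (n : ℕ) (t : ℝ) :
    maxExpTail μ n t = ∑ k ∈ range n, exp (-μ * t) * (1 - exp (-μ * t)) ^ k := by
  rw [maxExpTail, ← mul_neg_geom_sum, sub_sub_cancel, mul_sum]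

lemma maxExpTail_nonneg (hμ : 0 ≤ μ) (n : ℕ) {t : ℝ} (ht : 0 ≤ t) : 0 ≤ maxExpTail μ n t := by
  have h := one_sub_exp_neg_mul_mem_Icc hμ ht
  exact sub_nonneg.mpr (pow_le_one₀ h.1 h.2)

lemma maxExpTail_le (hμ : 0 ≤ μ) (n : ℕ) {t : ℝ} (ht : 0 ≤ t) :
    maxExpTail μ n t ≤ n * exp (-μ * t) := by
  have h := one_sub_exp_neg_mul_mem_Icc hμ ht
  rw [maxExpTail_eq_sum]
  calc ∑ k ∈ range n, exp (-μ * t) * (1 - exp (-μ * t)) ^ k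
      ≤ ∑ k ∈ range n, exp (-μ * t) :=
        sum_le_sum fun k _ ↦ mul_le_of_le_one_right (exp_pos _).le (pow_le_one₀ h.1 h.2)
    _ = n * exp (-μ * t) := by simp

lemma hasDerivAt_maxExpTail_succ (μ : ℝ) (k : ℕ) (t : ℝ) :
    HasDerivAt (maxExpTail μ (k + 1))
      (-(((k : ℝ) + 1) * μ * (exp (-μ * t) * (1 - exp (-μ * t)) ^ k))) t := by
  have h : HasDerivAt (fun t ↦ 1 - (1 - exp (-μ * t)) ^ (k + 1)) _ t :=
    ((((hasDerivAt_id t).const_mul (-μ)).exp.const_sub 1).pow (k + 1)).const_sub 1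
  exact h.congr_deriv (by simp; ring)

lemma tendsto_exp_neg_mul_atTop (hμ : 0 < μ) :
    Tendsto (fun t ↦ exp (-μ * t)) atTop (𝓝 0) := by
  simpa using tendsto_rpow_mul_exp_neg_mul_atTop_nhds_zero 0 μ hμ

lemma tendsto_mul_exp_neg_mul_atTop (hμ : 0 < μ) :
    Tendsto (fun t ↦ t * exp (-μ * t)) atTop (𝓝 0) := by
  simpa using tendsto_rpow_mul_exp_neg_mul_atTop_nhds_zero 1 μ hμ

lemma integrableOn_mul_exp_neg_mul (hμ : 0 < μ) :
    IntegrableOn (fun t ↦ t * exp (-μ * t)) (Ioi 0) := by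
  simpa using integrableOn_rpow_mul_exp_neg_mul_rpow (s := 1) (p := 1) (by norm_num) one_pos hμ

lemma tendsto_maxExpTail_atTop (hμ : 0 < μ) (n : ℕ) :
    Tendsto (maxExpTail μ n) atTop (𝓝 0) := by
  have h := ((tendsto_const_nhds (x := (1 : ℝ))).sub (tendsto_exp_neg_mul_atTop hμ)).pow n
  convert h.const_sub 1 using 2
  · rfl
  · simp

lemma maxExpTail_succ_zero (μ : ℝ) (k : ℕ) : maxExpTail μ (k + 1) 0 = 1 := by
  simp [maxExpTail]

lemma hasDerivAt_neg_maxExpTail_succ_div (hμ : μ ≠ 0) (k : ℕ) (t : ℝ) :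
    HasDerivAt (fun t ↦ -maxExpTail μ (k + 1) t / ((k + 1) * μ))
      (exp (-μ * t) * (1 - exp (-μ * t)) ^ k) t := by
  refine ((hasDerivAt_maxExpTail_succ μ k t).neg.div_const _).congr_deriv ?_
  field_simp

lemma tendsto_neg_maxExpTail_succ_div_atTop (hμ : 0 < μ) (k : ℕ) :
    Tendsto (fun t ↦ -maxExpTail μ (k + 1) t / ((k + 1) * μ)) atTop (𝓝 0) := by
  simpa using ((tendsto_maxExpTail_atTop hμ (k + 1)).neg.div_const ((k + 1) * μ))

lemma exp_mul_one_sub_exp_pow_nonneg (hμ : 0 ≤ μ) (k : ℕ) {t : ℝ} (ht : 0 ≤ t) :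
    0 ≤ exp (-μ * t) * (1 - exp (-μ * t)) ^ k :=
  mul_nonneg (exp_pos _).le (pow_nonneg (one_sub_exp_neg_mul_mem_Icc hμ ht).1 k)

lemma integrableOn_exp_mul_one_sub_exp_pow (hμ : 0 < μ) (k : ℕ) :
    IntegrableOn (fun t ↦ exp (-μ * t) * (1 - exp (-μ * t)) ^ k) (Ioi 0) :=
  integrableOn_Ioi_deriv_of_nonneg' (fun t _ ↦ hasDerivAt_neg_maxExpTail_succ_div hμ.ne' k t)
    (fun _ ht ↦ exp_mul_one_sub_exp_pow_nonneg hμ.le k (le_of_lt ht))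
    (tendsto_neg_maxExpTail_succ_div_atTop hμ k)

lemma integral_exp_mul_one_sub_exp_pow (hμ : 0 < μ) (k : ℕ) :
    ∫ t in Ioi 0, exp (-μ * t) * (1 - exp (-μ * t)) ^ k = 1 / ((k + 1) * μ) := by
  rw [integral_Ioi_of_hasDerivAt_of_nonneg'
    (fun t _ ↦ hasDerivAt_neg_maxExpTail_succ_div hμ.ne' k t)
    (fun _ ht ↦ exp_mul_one_sub_exp_pow_nonneg hμ.le k (le_of_lt ht))
    (tendsto_neg_maxExpTail_succ_div_atTop hμ k), maxExpTail_succ_zero]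
  ring

lemma integrableOn_maxExpTail (hμ : 0 < μ) (n : ℕ) : IntegrableOn (maxExpTail μ n) (Ioi 0) := by
  simp_rw [funext (maxExpTail_eq_sum μ n)]
  exact integrable_finsetSum _ fun k _ ↦ integrableOn_exp_mul_one_sub_exp_pow hμ k

lemma integral_maxExpTail (hμ : 0 < μ) (n : ℕ) :
    ∫ t in Ioi 0, maxExpTail μ n t = harmonicSum 1 n / μ := by
  simp_rw [maxExpTail_eq_sum μ n]
  rw [integral_finsetSum _ fun k _ ↦ integrableOn_exp_mul_one_sub_exp_pow hμ k, harmonicSum,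
    sum_div]
  refine sum_congr rfl fun k _ ↦ ?_
  rw [integral_exp_mul_one_sub_exp_pow hμ]
  field_simp

lemma integrableOn_mul_exp_mul_one_sub_exp_pow (hμ : 0 < μ) (k : ℕ) :
    IntegrableOn (fun t ↦ t * (exp (-μ * t) * (1 - exp (-μ * t)) ^ k)) (Ioi 0) := by
  refine (integrableOn_mul_exp_neg_mul hμ).mono' (by fun_prop) ?_
  filter_upwards [ae_restrict_mem measurableSet_Ioi] with t ht
  have h := one_sub_exp_neg_mul_mem_Icc hμ.le (le_of_lt ht)
  have hk := exp_mul_one_sub_exp_pow_nonneg hμ.le k (le_of_lt ht)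
  rw [norm_of_nonneg (mul_nonneg (le_of_lt ht) hk)]
  exact mul_le_mul_of_nonneg_left
    (mul_le_of_le_one_right (exp_pos _).le (pow_le_one₀ h.1 h.2)) (le_of_lt ht)

lemma tendsto_mul_maxExpTail_atTop (hμ : 0 < μ) (n : ℕ) :
    Tendsto (fun t ↦ t * maxExpTail μ n t) atTop (𝓝 0) := by
  have h := (tendsto_mul_exp_neg_mul_atTop hμ).const_mul (n : ℝ)
  rw [mul_zero] at h
  refine squeeze_zero' ?_ ?_ h
  · filter_upwards [eventually_ge_atTop 0] with t ht
    exact mul_nonneg ht (maxExpTail_nonneg hμ.le n ht)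
  · filter_upwards [eventually_ge_atTop 0] with t ht
    calc t * maxExpTail μ n t ≤ t * (n * exp (-μ * t)) :=
          mul_le_mul_of_nonneg_left (maxExpTail_le hμ.le n ht) ht
      _ = n * (t * exp (-μ * t)) := by ring

lemma integral_mul_exp_mul_one_sub_exp_pow (hμ : 0 < μ) (k : ℕ) :
    ∫ t in Ioi 0, t * (exp (-μ * t) * (1 - exp (-μ * t)) ^ k)
      = harmonicSum 1 (k + 1) / ((k + 1) * μ ^ 2) := by
  set v : ℝ → ℝ := fun t ↦ -maxExpTail μ (k + 1) t / ((k + 1) * μ)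
  have hv_int : IntegrableOn v (Ioi 0) := ((integrableOn_maxExpTail hμ (k + 1)).neg.div_const _)
  have h_zero : Tendsto (fun t ↦ t * v t) (𝓝[>] 0) (𝓝 0) := by
    have hcont : Continuous fun t ↦ t * v t := by simp only [v, maxExpTail]; fun_prop
    simpa using (hcont.tendsto 0).mono_left nhdsWithin_le_nhds
  have h_infty : Tendsto (fun t ↦ t * v t) atTop (𝓝 0) := by
    have h := (tendsto_mul_maxExpTail_atTop hμ (k + 1)).neg.div_const ((k + 1) * μ)
    rw [neg_zero, zero_div] at h
    exact h.congr fun t ↦ by simp only [v]; ring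
  have hibp := integral_Ioi_mul_deriv_eq_deriv_mul (fun t _ ↦ hasDerivAt_id' t)
    (fun t _ ↦ hasDerivAt_neg_maxExpTail_succ_div hμ.ne' k t)
    (integrableOn_mul_exp_mul_one_sub_exp_pow hμ k) (by simpa [Pi.mul_def] using hv_int)
    h_zero h_infty
  rw [hibp]
  simp only [one_mul, integral_div, integral_neg, integral_maxExpTail hμ]
  field_simp
  ring

lemma integrableOn_mul_maxExpTail (hμ : 0 < μ) (n : ℕ) :
    IntegrableOn (fun t ↦ t * maxExpTail μ n t) (Ioi 0) := by
  simp_rw [maxExpTail_eq_sum μ n, mul_sum]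
  exact integrable_finsetSum _ fun k _ ↦ integrableOn_mul_exp_mul_one_sub_exp_pow hμ k

lemma integral_mul_maxExpTail (hμ : 0 < μ) (n : ℕ) :
    ∫ t in Ioi 0, t * maxExpTail μ n t
      = (harmonicSum 1 n ^ 2 + harmonicSum 2 n) / (2 * μ ^ 2) := by
  simp_rw [maxExpTail_eq_sum μ n, mul_sum]
  rw [integral_finsetSum _ fun k _ ↦ integrableOn_mul_exp_mul_one_sub_exp_pow hμ k,
    ← div_div, ← sum_harmonicSum_succ_div, sum_div]
  refine sum_congr rfl fun k _ ↦ ?_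
  rw [integral_mul_exp_mul_one_sub_exp_pow hμ]
  field_simp

end MaxExpTail

section Tail

variable {Ω : Type*} [MeasurableSpace Ω] {P : Measure Ω} {X : Ω → ℝ} {ρ : ℝ → ℝ}

lemma lintegral_ofReal_pow_eq_of_tail (hX : AEMeasurable X P) (hX0 : 0 ≤ᵐ[P] X)
    (htail : ∀ t > 0, P {ω | t < X ω} = ENNReal.ofReal (ρ t)) (hρ : ∀ t > 0, 0 ≤ ρ t) (n : ℕ)
    (hint : IntegrableOn (fun t ↦ t ^ n * ρ t) (Ioi 0)) :
    ∫⁻ ω, ENNReal.ofReal (X ω ^ (n + 1)) ∂P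
      = ENNReal.ofReal ((n + 1) * ∫ t in Ioi 0, t ^ n * ρ t) := by
  have h := lintegral_comp_eq_lintegral_meas_lt_mul P hX0 hX
    (g := fun t ↦ (n + 1) * t ^ n) (fun _ _ ↦ by apply Continuous.intervalIntegrable; fun_prop)
    (ae_restrict_of_forall_mem measurableSet_Ioi fun t ht ↦ by
      have : (0 : ℝ) < t := ht; positivity)
  simp only [intervalIntegral.integral_const_mul, integral_pow, zero_pow n.succ_ne_zero, sub_zero,
    mul_div_cancel₀ _ (n.cast_add_one_ne_zero (R := ℝ))] at h
  rw [h, ← integral_const_mul, ofReal_integral_eq_lintegral_ofReal (hint.const_mul _)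
    (ae_restrict_of_forall_mem measurableSet_Ioi fun t ht ↦ by
      have : (0 : ℝ) < t := ht; have := hρ t ht; positivity)]
  refine setLIntegral_congr_fun measurableSet_Ioi fun t ht ↦ ?_
  rw [htail t ht, ← ENNReal.ofReal_mul (hρ t ht)]
  congr 1
  ring

lemma integrable_pow_of_tail (hX : AEMeasurable X P) (hX0 : 0 ≤ᵐ[P] X)
    (htail : ∀ t > 0, P {ω | t < X ω} = ENNReal.ofReal (ρ t)) (hρ : ∀ t > 0, 0 ≤ ρ t) (n : ℕ)
    (hint : IntegrableOn (fun t ↦ t ^ n * ρ t) (Ioi 0)) :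
    Integrable (fun ω ↦ X ω ^ (n + 1)) P := by
  refine ⟨(hX.pow_const _).aestronglyMeasurable, ?_⟩
  rw [hasFiniteIntegral_iff_ofReal (hX0.mono fun ω h ↦ pow_nonneg h _),
    lintegral_ofReal_pow_eq_of_tail hX hX0 htail hρ n hint]
  exact ENNReal.ofReal_lt_top

lemma integral_pow_eq_of_tail (hX : AEMeasurable X P) (hX0 : 0 ≤ᵐ[P] X)
    (htail : ∀ t > 0, P {ω | t < X ω} = ENNReal.ofReal (ρ t)) (hρ : ∀ t > 0, 0 ≤ ρ t) (n : ℕ)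
    (hint : IntegrableOn (fun t ↦ t ^ n * ρ t) (Ioi 0)) :
    ∫ ω, X ω ^ (n + 1) ∂P = (n + 1) * ∫ t in Ioi 0, t ^ n * ρ t := by
  rw [integral_eq_lintegral_of_nonneg_ae (hX0.mono fun ω h ↦ pow_nonneg h _)
    (hX.pow_const _).aestronglyMeasurable, lintegral_ofReal_pow_eq_of_tail hX hX0 htail hρ n hint,
    ENNReal.toReal_ofReal]
  exact mul_nonneg (by positivity) (setIntegral_nonneg measurableSet_Ioi fun t ht ↦
    mul_nonneg (pow_nonneg (le_of_lt ht) n) (hρ t ht))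

end Tail

section MaxExp

variable {Ω : Type*} [MeasurableSpace Ω] {P : Measure Ω} {X : Ω → ℝ} {μ : ℝ} {n : ℕ}

lemma integral_eq_of_tail_eq_maxExpTail (hμ : 0 < μ) (hX : AEMeasurable X P) (hX0 : 0 ≤ᵐ[P] X)
    (htail : ∀ t > 0, P {ω | t < X ω} = ENNReal.ofReal (maxExpTail μ n t)) :
    ∫ ω, X ω ∂P = harmonicSum 1 n / μ := by
  simpa [integral_maxExpTail hμ] using integral_pow_eq_of_tail hX hX0 htail
    (fun t ht ↦ maxExpTail_nonneg hμ.le n (le_of_lt ht)) 0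
    (by simpa using integrableOn_maxExpTail hμ n)

lemma memLp_two_of_tail_eq_maxExpTail (hμ : 0 < μ) (hX : AEMeasurable X P) (hX0 : 0 ≤ᵐ[P] X)
    (htail : ∀ t > 0, P {ω | t < X ω} = ENNReal.ofReal (maxExpTail μ n t)) : MemLp X 2 P :=
  (memLp_two_iff_integrable_sq hX.aestronglyMeasurable).2 <| integrable_pow_of_tail hX hX0 htail
    (fun t ht ↦ maxExpTail_nonneg hμ.le n (le_of_lt ht)) 1
    (by simpa using integrableOn_mul_maxExpTail hμ n)

lemma variance_eq_of_tail_eq_maxExpTail [IsProbabilityMeasure P] (hμ : 0 < μ)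
    (hX : AEMeasurable X P) (hX0 : 0 ≤ᵐ[P] X)
    (htail : ∀ t > 0, P {ω | t < X ω} = ENNReal.ofReal (maxExpTail μ n t)) :
    Var[X; P] = harmonicSum 2 n / μ ^ 2 := by
  have hsq := integral_pow_eq_of_tail hX hX0 htail
    (fun t ht ↦ maxExpTail_nonneg hμ.le n (le_of_lt ht)) 1
    (by simpa using integrableOn_mul_maxExpTail hμ n)
  simp only [pow_one, integral_mul_maxExpTail hμ] at hsq
  rw [variance_eq_sub (memLp_two_of_tail_eq_maxExpTail hμ hX hX0 htail),
    integral_eq_of_tail_eq_maxExpTail hμ hX hX0 htail]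
  simp only [Pi.pow_apply, hsq]
  field_simp
  ring

end MaxExp

section ShiftedExp

variable {Ω : Type*} [MeasurableSpace Ω] {P : Measure Ω}

noncomputable def shiftedExpCDF (Δ' μ s : ℝ) : ℝ := if s < Δ' then 0 else 1 - exp (-μ * (s - Δ'))

lemma shiftedExpCDF_nonneg {μ : ℝ} (hμ : 0 ≤ μ) (Δ' s : ℝ) : 0 ≤ shiftedExpCDF Δ' μ s := by
  unfold shiftedExpCDF
  split_ifs with h
  · rfl
  · exact (one_sub_exp_neg_mul_mem_Icc hμ (sub_nonneg.mpr (not_lt.mp h))).1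

lemma ProbabilityTheory.iIndepFun.measure_sup'_le {ι : Type*} [Fintype ι] {T : ι → Ω → ℝ}
    (h : iIndepFun T P) (hne : (univ : Finset ι).Nonempty) (s : ℝ) :
    P {ω | univ.sup' hne (fun i ↦ T i ω) ≤ s} = ∏ i, P {ω | T i ω ≤ s} := by
  have hset : {ω | univ.sup' hne (fun i ↦ T i ω) ≤ s} = ⋂ i, T i ⁻¹' Iic s := by
    ext ω
    simp [sup'_le_iff]
  rw [hset, h.meas_iInter fun i ↦ ⟨Iic s, measurableSet_Iic, rfl⟩]
  rfl

lemma ae_le_of_forall_lt_measure_le_eq_zero {X : Ω → ℝ} {a : ℝ}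
    (h : ∀ s < a, P {ω | X ω ≤ s} = 0) : ∀ᵐ ω ∂P, a ≤ X ω := by
  have hIio : ⋃ k : ℕ, Iic (a - 1 / ((k : ℝ) + 1)) = Iio a :=
    iUnion_Iic_eq_Iio_of_lt_of_tendsto (fun k ↦ sub_lt_self a (by positivity))
      (by simpa using tendsto_one_div_add_atTop_nhds_zero_nat.const_sub a)
  have hset : {ω | X ω < a} = ⋃ k : ℕ, {ω | X ω ≤ a - 1 / ((k : ℝ) + 1)} := by
    change X ⁻¹' Iio a = ⋃ k : ℕ, X ⁻¹' Iic _
    rw [← hIio, preimage_iUnion]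
  simp only [ae_iff, not_le, hset]
  exact measure_iUnion_null fun k ↦ h _ (sub_lt_self a (by positivity))

variable {M : Ω → ℝ} {Δ' μ : ℝ} {n : ℕ}

lemma sub_nonneg_ae_of_cdf_eq_shiftedExpCDF_pow (hn : n ≠ 0)
    (hcdf : ∀ s, P {ω | M ω ≤ s} = ENNReal.ofReal (shiftedExpCDF Δ' μ s ^ n)) :
    0 ≤ᵐ[P] fun ω ↦ M ω - Δ' := by
  filter_upwards [ae_le_of_forall_lt_measure_le_eq_zero (X := M) (a := Δ') fun s hs ↦ by
    simp [hcdf, shiftedExpCDF, hs, hn]] with ω h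
  exact sub_nonneg.mpr h

variable [IsProbabilityMeasure P]

lemma measure_lt_sub_eq_maxExpTail (hμ : 0 ≤ μ) (hM : Measurable M)
    (hcdf : ∀ s, P {ω | M ω ≤ s} = ENNReal.ofReal (shiftedExpCDF Δ' μ s ^ n))
    {t : ℝ} (ht : 0 ≤ t) :
    P {ω | t < M ω - Δ'} = ENNReal.ofReal (maxExpTail μ n t) := by
  have hset : {ω | t < M ω - Δ'} = {ω | M ω ≤ Δ' + t}ᶜ := by
    ext ω
    simp only [mem_ofPred_eq, mem_compl_iff, not_le]
    constructor <;> intro h <;> linarith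
  have hF : shiftedExpCDF Δ' μ (Δ' + t) = 1 - exp (-μ * t) := by
    simp [shiftedExpCDF, ht]
  rw [hset, prob_compl_eq_one_sub (measurableSet_le hM measurable_const), hcdf, hF,
    ← ENNReal.ofReal_one, ← ENNReal.ofReal_sub _
      (pow_nonneg (one_sub_exp_neg_mul_mem_Icc hμ ht).1 n)]
  rfl

lemma integral_eq_of_cdf_eq_shiftedExpCDF_pow (hμ : 0 < μ) (hn : n ≠ 0) (hM : Measurable M)
    (hcdf : ∀ s, P {ω | M ω ≤ s} = ENNReal.ofReal (shiftedExpCDF Δ' μ s ^ n)) :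
    ∫ ω, M ω ∂P = Δ' + harmonicSum 1 n / μ := by
  have hY0 := sub_nonneg_ae_of_cdf_eq_shiftedExpCDF_pow hn hcdf
  have htail := fun t (ht : 0 < t) ↦ measure_lt_sub_eq_maxExpTail hμ.le hM hcdf ht.le
  have hY : AEMeasurable (fun ω ↦ M ω - Δ') P := (hM.sub_const Δ').aemeasurable
  have hYint := (memLp_two_of_tail_eq_maxExpTail hμ hY hY0 htail).integrable one_le_two
  calc ∫ ω, M ω ∂P = ∫ ω, (M ω - Δ') + Δ' ∂P := by simp
    _ = Δ' + harmonicSum 1 n / μ := by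
      rw [integral_add hYint (integrable_const Δ'),
        integral_eq_of_tail_eq_maxExpTail hμ hY hY0 htail]
      simp [add_comm]

lemma variance_eq_of_cdf_eq_shiftedExpCDF_pow (hμ : 0 < μ) (hn : n ≠ 0) (hM : Measurable M)
    (hcdf : ∀ s, P {ω | M ω ≤ s} = ENNReal.ofReal (shiftedExpCDF Δ' μ s ^ n)) :
    Var[M; P] = harmonicSum 2 n / μ ^ 2 := by
  have hY : AEMeasurable (fun ω ↦ M ω - Δ') P := (hM.sub_const Δ').aemeasurable
  calc Var[M; P] = Var[fun ω ↦ (M ω - Δ') + Δ'; P] := by simp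
    _ = harmonicSum 2 n / μ ^ 2 := by
      rw [variance_add_const hY.aestronglyMeasurable]
      exact variance_eq_of_tail_eq_maxExpTail hμ hY
        (sub_nonneg_ae_of_cdf_eq_shiftedExpCDF_pow hn hcdf)
        fun t ht ↦ measure_lt_sub_eq_maxExpTail hμ.le hM hcdf (le_of_lt ht)

end ShiftedExp

theorem cov_max_shifted_exponential_general
    {Ω : Type*} [MeasureSpace Ω] [IsProbabilityMeasure (ℙ : Measure Ω)]
    (Δ' μ : ℝ) (hμ : 0 < μ) (B : ℕ) (hB : 1 ≤ B)
    (T : Fin B → Ω → ℝ) (hmeas : ∀ i, Measurable (T i))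
    (hindep : iIndepFun T ℙ)
    (hcdf : ∀ i t, ℙ {ω | T i ω ≤ t} =
      ENNReal.ofReal (if t < Δ' then 0 else 1 - Real.exp (-μ * (t - Δ')))) :
    Real.sqrt (variance (fun ω => Finset.univ.sup' ⟨⟨0, hB⟩, Finset.mem_univ _⟩
        fun i => T i ω) ℙ)
      / (∫ ω, Finset.univ.sup' ⟨⟨0, hB⟩, Finset.mem_univ _⟩ fun i => T i ω)
    = Real.sqrt (∑ k ∈ Finset.range B, (1 : ℝ) / ((k : ℝ) + 1) ^ 2)
      / (Δ' * μ + ∑ k ∈ Finset.range B, (1 : ℝ) / ((k : ℝ) + 1)) := by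
  have hB0 : B ≠ 0 := Nat.one_le_iff_ne_zero.mp hB
  have hM : Measurable fun ω ↦ univ.sup' ⟨⟨0, hB⟩, mem_univ _⟩ fun i ↦ T i ω := by
    fun_prop
  have hcdf_max : ∀ s, ℙ {ω | univ.sup' ⟨⟨0, hB⟩, mem_univ _⟩ (fun i ↦ T i ω) ≤ s}
      = ENNReal.ofReal (shiftedExpCDF Δ' μ s ^ B) := fun s ↦ by
    refine (hindep.measure_sup'_le _ s).trans ?_
    rw [prod_congr rfl fun i _ ↦ hcdf i s, prod_const, card_univ, Fintype.card_fin,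
      ENNReal.ofReal_pow (shiftedExpCDF_nonneg hμ.le Δ' s)]
    rfl
  rw [variance_eq_of_cdf_eq_shiftedExpCDF_pow hμ hB0 hM hcdf_max,
    integral_eq_of_cdf_eq_shiftedExpCDF_pow hμ hB0 hM hcdf_max,
    sqrt_div' _ (sq_nonneg μ), sqrt_sq hμ.le, div_div]
  simp only [harmonicSum, pow_one]
  congr 1
  field_simp

/-- If `T 0, …, T (B-1)` are i.i.d. shifted-exponential SExp(Δ', μ) random variables and
`M = max_i T i`, then the coefficient of variations of the job compute time satisfies
`√(Var[M]) / E[M] = √(H_{B,2}) / (Δ'μ + H_{B,1})`. -/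
theorem cov_max_shifted_exponential
    {Ω : Type*} [MeasureSpace Ω] [IsProbabilityMeasure (ℙ : Measure Ω)]
    (Δ' μ : ℝ) (hΔ' : 0 ≤ Δ') (hμ : 0 < μ) (B : ℕ) (hB : 1 ≤ B)
    (T : Fin B → Ω → ℝ) (hmeas : ∀ i, Measurable (T i))
    (hindep : iIndepFun T ℙ)
    (hcdf : ∀ i t, ℙ {ω | T i ω ≤ t} =
      ENNReal.ofReal (if t < Δ' then 0 else 1 - Real.exp (-μ * (t - Δ')))) :
    Real.sqrt (variance (fun ω => Finset.univ.sup' ⟨⟨0, hB⟩, Finset.mem_univ _⟩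
        fun i => T i ω) ℙ)
      / (∫ ω, Finset.univ.sup' ⟨⟨0, hB⟩, Finset.mem_univ _⟩ fun i => T i ω)
    = Real.sqrt (∑ k ∈ Finset.range B, (1 : ℝ) / ((k : ℝ) + 1) ^ 2)
      / (Δ' * μ + ∑ k ∈ Finset.range B, (1 : ℝ) / ((k : ℝ) + 1)) :=
  cov_max_shifted_exponential_general Δ' μ hμ B hB T hmeas hindep hcdf
end

section
/- For every real x with 0 < x < 1/2: (1/2) · Γ(3) · Γ(1 − 2x) / Γ(3 − 2x) < Γ(2) · Γ(1 − x) / Γ(2 − x) if and only if x < 1/4. In particular, with x = 1/(Nα), the average job compute time (Nσ/B) · Γ(B+1) Γ(1 − B/(Nα)) / Γ(B + 1 − B/(Nα)) under Pareto(σ, α) service times is strictly smaller at B = 2 than at B = 1 if and only if Nα > 4; hence for α > 1 and N > 4 the average job compute time is initially decreasing in B, so full diversity (B = 1) is never optimal. -/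
/-- For `0 < x < 1/2`:
`(1/2)·Γ(3)·Γ(1−2x)/Γ(3−2x) < Γ(2)·Γ(1−x)/Γ(2−x)` if and only if `x < 1/4`.
(With `x = 1/(Nα)`, the average job compute time under Pareto(σ, α) service times is strictly
smaller at `B = 2` than at `B = 1` iff `Nα > 4`.) -/
theorem pareto_B2_beats_B1_iff (x : ℝ) (hx0 : 0 < x) (hx : x < 1 / 2) :
    ((1 / 2) * Real.Gamma 3 * Real.Gamma (1 - 2 * x) / Real.Gamma (3 - 2 * x)
        < Real.Gamma 2 * Real.Gamma (1 - x) / Real.Gamma (2 - x))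
      ↔ x < 1 / 4 := by
  have h12 : (0:ℝ) < 1 - 2 * x := by linarith
  have h1x : (0:ℝ) < 1 - x := by linarith
  have h22 : (0:ℝ) < 2 - 2 * x := by linarith
  have hG12 : 0 < Real.Gamma (1 - 2 * x) := Real.Gamma_pos_of_pos h12
  have hG1x : 0 < Real.Gamma (1 - x) := Real.Gamma_pos_of_pos h1x
  have hG3 : Real.Gamma 3 = 2 := by
    rw [show (3:ℝ) = 2 + 1 by norm_num, Real.Gamma_add_one (by norm_num),
      Real.Gamma_two]
    norm_num
  have hG2 : Real.Gamma 2 = 1 := Real.Gamma_two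
  have h2x : Real.Gamma (2 - x) = (1 - x) * Real.Gamma (1 - x) := by
    rw [show (2:ℝ) - x = (1 - x) + 1 by ring, Real.Gamma_add_one (ne_of_gt h1x)]
  have h32x : Real.Gamma (3 - 2 * x)
      = (2 - 2 * x) * ((1 - 2 * x) * Real.Gamma (1 - 2 * x)) := by
    rw [show (3:ℝ) - 2 * x = (2 - 2 * x) + 1 by ring,
      Real.Gamma_add_one (ne_of_gt h22),
      show (2:ℝ) - 2 * x = (1 - 2 * x) + 1 by ring,
      Real.Gamma_add_one (ne_of_gt h12)]
  rw [hG3, hG2, h2x, h32x]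
  rw [div_lt_div_iff₀ (by positivity) (by positivity),
    show 1 / 2 * 2 * Real.Gamma (1 - 2 * x) * ((1 - x) * Real.Gamma (1 - x))
      = (Real.Gamma (1 - 2 * x) * Real.Gamma (1 - x)) * (1 - x) by ring,
    show 1 * Real.Gamma (1 - x) * ((2 - 2 * x) * ((1 - 2 * x) * Real.Gamma (1 - 2 * x)))
      = (Real.Gamma (1 - 2 * x) * Real.Gamma (1 - x)) * ((2 - 2 * x) * (1 - 2 * x)) by ring,
    mul_lt_mul_iff_right₀ (mul_pos hG12 hG1x)]
  constructor
  · intro h; nlinarith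
  · intro h; nlinarith
end

section
/- Let N > 4 and α > 2 be reals, and define R : [1, N] → ℝ by R(b) = Γ(b + 1 − b/(Nα)) · Γ(1 − 2b/(Nα)) / ( Γ(b + 1 − 2b/(Nα)) · Γ(1 − b/(Nα)) ), where Γ is the Gamma function (all arguments are positive for b ∈ [1, N] since α > 2). Then R is monotone nondecreasing on [1, N]: for all reals 1 ≤ b₁ ≤ b₂ ≤ N, R(b₁) ≤ R(b₂). Consequently, the coefficient of variations of job compute time √(R(B) − 1) under Pareto task service times is minimized over B ∈ {1, …, N} at B = 1, i.e., at full diversity. -/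
/-!
Write `u = b / (Nα)` and `G_c(x) = log Γ(x + c) - log Γ(x)`. Then
`log R = G_b(1 - u) - G_b(1 - 2u) = G_u(b + 1 - 2u) - G_u(1 - 2u)`.
For `c ≥ 0` the function `G_c` is nondecreasing on `(0, ∞)` because `log Γ` is convex; this
gives monotonicity in `b` at fixed `u`. The Gauss product turns `G_c` into a limit of sums of
`log (x + j) - log (x + j + c)`, each concave in `x`, so `G_c(p) + G_c(q) ≤ G_c(m) + G_c(s)`
whenever `p + q = m + s` and `pq ≤ ms`; together with monotonicity this gives monotonicity in `u`
at fixed `b`.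
-/

open Real Filter Finset Set Topology

theorem ConvexOn.map_add_sub_map_le {𝕜 : Type*} [Field 𝕜] [LinearOrder 𝕜]
    [IsStrictOrderedRing 𝕜] {s : Set 𝕜} {f : 𝕜 → 𝕜} (hf : ConvexOn 𝕜 s f) {x y c : 𝕜}
    (hx : x ∈ s) (hxc : x + c ∈ s) (hy : y ∈ s) (hyc : y + c ∈ s) (hc : 0 ≤ c) (hxy : x ≤ y) :
    f (x + c) - f x ≤ f (y + c) - f y := by
  rcases hc.eq_or_lt with rfl | hc
  · simp
  have h₁ := hf.secant_mono hx hxc hyc (by linarith) (by linarith) (by linarith)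
  have h₂ := hf.secant_mono hyc hx hy (by linarith) (by linarith) hxy
  rw [← neg_div_neg_eq (f x - f (y + c)), neg_sub, neg_sub] at h₂
  have h := h₁.trans h₂
  rw [add_sub_cancel_left, sub_add_cancel_left, div_neg, ← neg_div, neg_sub] at h
  exact (div_le_div_iff_of_pos_right hc).1 h

noncomputable def logGammaGap (c x : ℝ) : ℝ := log (Gamma (x + c)) - log (Gamma x)

theorem logGammaGap_add_sub_logGammaGap (c d x : ℝ) :
    logGammaGap c (x + d) - logGammaGap c x = logGammaGap d (x + c) - logGammaGap d x := by
  simp only [logGammaGap, add_right_comm x d c]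
  ring

theorem monotoneOn_logGammaGap {c : ℝ} (hc : 0 ≤ c) : MonotoneOn (logGammaGap c) (Ioi 0) :=
  fun x (hx : 0 < x) y (hy : 0 < y) hxy =>
    convexOn_log_Gamma.map_add_sub_map_le hx (show 0 < x + c by linarith) hy
      (show 0 < y + c by linarith) hc hxy

theorem tendsto_logGammaGap {c x : ℝ} (hx : 0 < x) (hxc : 0 < x + c) :
    Tendsto (fun n : ℕ => c * log n + ∑ j ∈ range (n + 1), (log (x + j) - log (x + j + c)))
      atTop (𝓝 (logGammaGap c x)) := by
  refine ((BohrMollerup.tendsto_log_gamma hxc).sub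
    (BohrMollerup.tendsto_log_gamma hx)).congr fun n => ?_
  simp only [BohrMollerup.logGammaSeq, sum_sub_distrib, add_right_comm x c]
  ring

theorem log_sub_log_add_add_le {c p q m s : ℝ} (hc : 0 ≤ c) (hp : 0 < p) (hq : 0 < q)
    (hm : 0 < m) (hs : 0 < s) (hsum : p + q = m + s) (hprod : p * q ≤ m * s) :
    (log p - log (p + c)) + (log q - log (q + c)) ≤
      (log m - log (m + c)) + (log s - log (s + c)) := by
  -- given `p + q = m + s`, the two sides differ by `c (ms - pq) (p + q + c)`
  have key : p * q * ((m + c) * (s + c)) ≤ m * s * ((p + c) * (q + c)) := by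
    have hgap : 0 ≤ c * (m * s - p * q) * (p + q + c) := by
      have := sub_nonneg.2 hprod
      positivity
    linear_combination hgap - (c * p * q) * hsum
  have h := log_le_log (by positivity) key
  rw [log_mul (by positivity) (by positivity), log_mul (by positivity) (by positivity),
    log_mul (by positivity) (by positivity), log_mul (by positivity) (by positivity),
    log_mul (by positivity) (by positivity), log_mul (by positivity) (by positivity)] at h
  linarith

theorem logGammaGap_add_logGammaGap_le {c p q m s : ℝ} (hc : 0 ≤ c) (hp : 0 < p) (hq : 0 < q)
    (hm : 0 < m) (hs : 0 < s) (hsum : p + q = m + s) (hprod : p * q ≤ m * s) :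
    logGammaGap c p + logGammaGap c q ≤ logGammaGap c m + logGammaGap c s := by
  have hlim (x : ℝ) (hx : 0 < x) := tendsto_logGammaGap (c := c) hx (by linarith)
  refine le_of_tendsto_of_tendsto' ((hlim p hp).add (hlim q hq))
    ((hlim m hm).add (hlim s hs)) fun n => ?_
  have hterm : ∀ j ∈ range (n + 1),
      (log (p + j) - log (p + j + c)) + (log (q + j) - log (q + j + c)) ≤
        (log (m + j) - log (m + j + c)) + (log (s + j) - log (s + j + c)) := by
    intro j _
    have hj : (0 : ℝ) ≤ j := j.cast_nonneg
    exact log_sub_log_add_add_le hc (by positivity) (by positivity) (by positivity)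
      (by positivity) (by linear_combination hsum) (by linear_combination hprod + j * hsum)
  have := sum_le_sum hterm
  simp only [sum_add_distrib] at this
  linarith

noncomputable def paretoRatio (b u : ℝ) : ℝ :=
  Gamma (b + 1 - u) * Gamma (1 - 2 * u) / (Gamma (b + 1 - 2 * u) * Gamma (1 - u))

theorem paretoRatio_eq_exp {b u : ℝ} (hb : 0 ≤ b) (hu : u < 1 / 2) :
    paretoRatio b u = exp (logGammaGap b (1 - 2 * u + u) - logGammaGap b (1 - 2 * u)) := by
  have hΓ {x : ℝ} (hx : 0 < x) : exp (log (Gamma x)) = Gamma x := exp_log (Gamma_pos_of_pos hx)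
  rw [logGammaGap, logGammaGap, exp_sub, exp_sub, exp_sub, hΓ (by linarith), hΓ (by linarith),
    hΓ (by linarith), hΓ (by linarith), paretoRatio, div_div_div_eq]
  ring_nf

theorem paretoRatio_le_paretoRatio_left {b₁ b₂ u : ℝ} (hb₁ : 0 ≤ b₁) (hb : b₁ ≤ b₂)
    (hu₀ : 0 ≤ u) (hu : u < 1 / 2) : paretoRatio b₁ u ≤ paretoRatio b₂ u := by
  rw [paretoRatio_eq_exp hb₁ hu, paretoRatio_eq_exp (hb₁.trans hb) hu, exp_le_exp,
    logGammaGap_add_sub_logGammaGap b₁, logGammaGap_add_sub_logGammaGap b₂, sub_le_sub_iff_right]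
  exact monotoneOn_logGammaGap hu₀ (show 0 < 1 - 2 * u + b₁ by linarith)
    (show 0 < 1 - 2 * u + b₂ by linarith) (by linarith)

theorem paretoRatio_le_paretoRatio_right {b u₁ u₂ : ℝ} (hb : 0 ≤ b) (hu₁ : 0 ≤ u₁)
    (hu : u₁ ≤ u₂) (hu₂ : u₂ < 1 / 2) : paretoRatio b u₁ ≤ paretoRatio b u₂ := by
  rw [paretoRatio_eq_exp hb (hu.trans_lt hu₂), paretoRatio_eq_exp hb hu₂, exp_le_exp]
  -- lower `1 - 2 * u₁` to `1 - u₁ - u₂`, which equalizes the sums of the two pairs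
  have hspread := logGammaGap_add_logGammaGap_le hb (p := 1 - 2 * u₁ + u₁) (q := 1 - 2 * u₂)
    (m := 1 - u₁ - u₂) (s := 1 - 2 * u₂ + u₂) (by linarith) (by linarith) (by linarith)
    (by linarith) (by ring) (by nlinarith)
  have hmono := monotoneOn_logGammaGap hb (show 0 < 1 - u₁ - u₂ by linarith)
    (show 0 < 1 - 2 * u₁ by linarith) (by linarith)
  linarith

theorem pareto_cov_ratio_monotone_general
    (N α : ℝ) (hα : 2 < α)
    (b₁ b₂ : ℝ) (hb₁ : 1 ≤ b₁) (hb₁₂ : b₁ ≤ b₂) (hb₂ : b₂ ≤ N) :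
    Real.Gamma (b₁ + 1 - b₁ / (N * α)) * Real.Gamma (1 - 2 * b₁ / (N * α))
        / (Real.Gamma (b₁ + 1 - 2 * b₁ / (N * α)) * Real.Gamma (1 - b₁ / (N * α)))
      ≤ Real.Gamma (b₂ + 1 - b₂ / (N * α)) * Real.Gamma (1 - 2 * b₂ / (N * α))
          / (Real.Gamma (b₂ + 1 - 2 * b₂ / (N * α)) * Real.Gamma (1 - b₂ / (N * α))) := by
  have hNα : 0 < N * α := mul_pos (by linarith) (by linarith)
  have hu₁ : 0 ≤ b₁ / (N * α) := by positivity
  have hu : b₁ / (N * α) ≤ b₂ / (N * α) := by gcongr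
  have hu₂ : b₂ / (N * α) < 1 / 2 := by
    rw [div_lt_iff₀ hNα]
    nlinarith
  rw [mul_div_assoc 2 b₁, mul_div_assoc 2 b₂]
  show paretoRatio b₁ (b₁ / (N * α)) ≤ paretoRatio b₂ (b₂ / (N * α))
  exact (paretoRatio_le_paretoRatio_left (by linarith) hb₁₂ hu₁ (hu.trans_lt hu₂)).trans
    (paretoRatio_le_paretoRatio_right (by linarith) hu₁ hu hu₂)

/-- For reals `N > 4` and `α > 2`, the ratio
`R(b) = Γ(b+1−b/(Nα))·Γ(1−2b/(Nα)) / (Γ(b+1−2b/(Nα))·Γ(1−b/(Nα)))`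
is monotone nondecreasing on `[1, N]`. Consequently the coefficient of variations
`√(R(B) − 1)` of job compute time under Pareto service times is minimized at full diversity
`B = 1`. -/
theorem pareto_cov_ratio_monotone
    (N α : ℝ) (hN : 4 < N) (hα : 2 < α)
    (b₁ b₂ : ℝ) (hb₁ : 1 ≤ b₁) (hb₁₂ : b₁ ≤ b₂) (hb₂ : b₂ ≤ N) :
    Real.Gamma (b₁ + 1 - b₁ / (N * α)) * Real.Gamma (1 - 2 * b₁ / (N * α))
        / (Real.Gamma (b₁ + 1 - 2 * b₁ / (N * α)) * Real.Gamma (1 - b₁ / (N * α)))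
      ≤ Real.Gamma (b₂ + 1 - b₂ / (N * α)) * Real.Gamma (1 - 2 * b₂ / (N * α))
          / (Real.Gamma (b₂ + 1 - 2 * b₂ / (N * α)) * Real.Gamma (1 - b₂ / (N * α))) :=
  pareto_cov_ratio_monotone_general N α hα b₁ b₂ hb₁ hb₁₂ hb₂
end
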